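/- arXiv:1604.02064 — 3 statements merged into one kernel-verified Lean document; each statement's English description precedes it below -/
import Mathlib

section
/- Let M be a real, continuous, square-integrable martingale with M_0 = 0 and quadratic variation [M]. Given β ≥ 0 and C > 0, for any bounded stopping time τ and any ℓ > 0, P( sup_{t ≤ τ} M_t > ℓ and [M]_τ ≤ β·sup_{t≤τ} M_t + C ) ≤ exp( - ℓ² / (2(βℓ + C)) ). -/
/-!
Put `θ = ℓ / (βℓ + C)` and `g = ℓ² / (2(βℓ + C))`. On the event, at a time `u ≤ τ` where `M`
attains its supremum, `θ M_u - θ² [M]_u / 2 ≥ g`. Stop at the first such time `U` (or at `τ`).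
The exponential `exp (θ M - θ² [M] / 2)` stopped at `U` is bounded by `e^g` and has expectation
at most `1`, so Markov's inequality bounds the probability of the event by `e^{-g}`.

Without stochastic calculus, the expectation bound is proved by discretisation: along a random
partition of `[0, U]` by stopping times over which `M` and `[M]` move by at most `ε`, optional
sampling for `M` and `M² - [M]` together with a second-order Taylor bound for `exp` give
`E ℰ_{T_{k+1}} ≤ E ℰ_{T_k} + O(ε) E([M]_{T_{k+1}} - [M]_{T_k})`, and the error `O(ε) E [M]_cap`
vanishes as `ε → 0`. Optional sampling for a continuous martingale at a real-valued stopping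
time follows from the discrete theorem by dyadic approximation and uniform integrability.
-/

open MeasureTheory Set Filter Topology

noncomputable section

lemma abs_mul_le_of_abs_le {a b A B : ℝ} (ha : |a| ≤ A) (hb : |b| ≤ B) : |a * b| ≤ A * B :=
  abs_mul a b ▸ mul_le_mul ha hb (abs_nonneg b) ((abs_nonneg a).trans ha)

lemma Real.exp_le_quadratic_add_abs_pow_three {x : ℝ} (hx : |x| ≤ 1) :
    Real.exp x ≤ 1 + x + x ^ 2 / 2 + |x| ^ 3 := by
  have h := (abs_le.mp (Real.exp_bound hx (n := 3) (by norm_num))).2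
  norm_num [Finset.sum_range_succ, Nat.factorial] at h
  nlinarith [pow_nonneg (abs_nonneg x) 3]

lemma Real.exp_sub_le_second_order {a b η : ℝ} (ha : |a| ≤ η) (hb0 : 0 ≤ b) (hbη : b ≤ η)
    (hη : η ≤ 1 / 2) :
    Real.exp (a - b) ≤ 1 + a + (1 / 2 + 4 * η) * a ^ 2 + (5 * η - 1) * b := by
  have hη0 : 0 ≤ η := (abs_nonneg a).trans ha
  have ha' := abs_le.mp ha
  have hab : |a - b| ≤ 2 * η := abs_le.mpr ⟨by linarith, by linarith⟩
  have hcube : |a - b| ^ 3 ≤ 2 * η * (a - b) ^ 2 := by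
    rw [pow_succ, ← sq_abs (a - b), mul_comm]
    exact mul_le_mul_of_nonneg_right hab (sq_nonneg _)
  have := Real.exp_le_quadratic_add_abs_pow_three (x := a - b) (by linarith)
  nlinarith [sq_nonneg a, mul_nonneg hη0 hb0]

def dyadicCeil (n : ℕ) (x : ℝ) : ℝ := ⌈x * 2 ^ n⌉ / 2 ^ n

lemma le_dyadicCeil (n : ℕ) (x : ℝ) : x ≤ dyadicCeil n x := by
  rw [dyadicCeil, le_div_iff₀ (by positivity)]
  exact Int.le_ceil _

lemma dyadicCeil_le_iff {n : ℕ} {x t : ℝ} :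
    dyadicCeil n x ≤ t ↔ x ≤ ⌊t * 2 ^ n⌋ / 2 ^ n := by
  rw [dyadicCeil, div_le_iff₀ (by positivity), le_div_iff₀ (by positivity), ← Int.ceil_le,
    ← Int.le_floor]

lemma dyadicCeil_lt_add (n : ℕ) (x : ℝ) : dyadicCeil n x < x + (1 / 2) ^ n := by
  rw [dyadicCeil, div_lt_iff₀ (by positivity), add_mul, one_div, inv_pow,
    inv_mul_cancel₀ (by positivity)]
  exact Int.ceil_lt_add_one _

lemma tendsto_dyadicCeil (x : ℝ) : Tendsto (dyadicCeil · x) atTop (𝓝 x) := by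
  have hupper : Tendsto (fun n : ℕ => x + (1 / 2 : ℝ) ^ n) atTop (𝓝 x) := by
    simpa using tendsto_const_nhds.add
      (tendsto_pow_atTop_nhds_zero_of_lt_one (r := (1 / 2 : ℝ)) (by norm_num) (by norm_num))
  exact tendsto_of_tendsto_of_tendsto_of_le_of_le tendsto_const_nhds hupper
    (le_dyadicCeil · x) (fun n => (dyadicCeil_lt_add n x).le)

lemma countable_range_dyadicCeil (n : ℕ) : (range (dyadicCeil n)).Countable :=
  (countable_range fun z : ℤ => (z : ℝ) / 2 ^ n).mono <| by
    rintro _ ⟨x, rfl⟩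
    exact ⟨_, rfl⟩

section RealStoppingTime

variable {Ω : Type*} {m : MeasurableSpace Ω} {ℱ : Filtration ℝ m}

lemma isStoppingTime_coe_iff {S : Ω → ℝ} :
    IsStoppingTime ℱ (fun ω => (S ω : WithTop ℝ)) ↔
      ∀ t : ℝ, MeasurableSet[ℱ t] {ω | S ω ≤ t} := by
  simp only [IsStoppingTime, WithTop.coe_le_coe]

lemma MeasureTheory.IsStoppingTime.coe_min {S R : Ω → ℝ}
    (hS : IsStoppingTime ℱ fun ω => (S ω : WithTop ℝ))
    (hR : IsStoppingTime ℱ fun ω => (R ω : WithTop ℝ)) :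
    IsStoppingTime ℱ fun ω => ((min (S ω) (R ω) : ℝ) : WithTop ℝ) := by
  simpa only [WithTop.coe_min] using hS.min hR

lemma MeasureTheory.IsStoppingTime.coe_max {S R : Ω → ℝ}
    (hS : IsStoppingTime ℱ fun ω => (S ω : WithTop ℝ))
    (hR : IsStoppingTime ℱ fun ω => (R ω : WithTop ℝ)) :
    IsStoppingTime ℱ fun ω => ((max (S ω) (R ω) : ℝ) : WithTop ℝ) := by
  simpa only [WithTop.coe_max] using hS.max hR

lemma MeasureTheory.IsStoppingTime.coe_dyadicCeil {S : Ω → ℝ}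
    (hS : IsStoppingTime ℱ fun ω => (S ω : WithTop ℝ)) (n : ℕ) :
    IsStoppingTime ℱ fun ω => (dyadicCeil n (S ω) : WithTop ℝ) := by
  refine isStoppingTime_coe_iff.mpr fun t => ?_
  simp_rw [dyadicCeil_le_iff]
  have hgrid : (⌊t * 2 ^ n⌋ : ℝ) / 2 ^ n ≤ t := by
    rw [div_le_iff₀ (by positivity)]
    exact Int.floor_le _
  exact ℱ.mono hgrid _ (isStoppingTime_coe_iff.mp hS _)

lemma MeasureTheory.StronglyAdapted.stronglyMeasurable_comp_of_continuous {X : ℝ → Ω → ℝ}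
    (hXa : StronglyAdapted ℱ X) (hXc : ∀ ω, Continuous fun t => X t ω) {S : Ω → ℝ}
    (hS : IsStoppingTime ℱ fun ω => (S ω : WithTop ℝ)) :
    StronglyMeasurable[hS.measurableSpace] fun ω => X (S ω) ω :=
  (measurable_stoppedValue (hXa.isStronglyProgressive_of_continuous hXc) hS).stronglyMeasurable

end RealStoppingTime

namespace MeasureTheory.Martingale

variable {Ω : Type*} {m : MeasurableSpace Ω} {P : Measure Ω} [IsFiniteMeasure P]
  {ℱ : Filtration ℝ m} {f : ℝ → Ω → ℝ} {S R : Ω → ℝ} {b : ℝ}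

/-- At the dyadic stopping times `min (dyadicCeil n ∘ S) b` the discrete optional sampling theorem
applies; they decrease to `S`, and uniform integrability of the conditional expectations of `f b`
lets the identity pass to the limit in `L¹`. -/
theorem stoppedValue_ae_eq_condExp_of_continuous (hf : Martingale f ℱ P)
    (hfc : ∀ ω, Continuous fun t => f t ω) (hS : IsStoppingTime ℱ fun ω => (S ω : WithTop ℝ))
    (hSb : ∀ ω, S ω ≤ b) :
    (fun ω => f (S ω) ω) =ᵐ[P] P[f b | hS.measurableSpace] := by
  set Sn : ℕ → Ω → ℝ := fun n ω => min (dyadicCeil n (S ω)) b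
  have hSn n : IsStoppingTime ℱ fun ω => (Sn n ω : WithTop ℝ) :=
    (hS.coe_dyadicCeil n).coe_min (isStoppingTime_const ℱ b)
  have hSnb n : ∀ ω, (Sn n ω : WithTop ℝ) ≤ b := fun ω => WithTop.coe_le_coe.mpr (min_le_right _ _)
  have hSSn n : hS.measurableSpace ≤ (hSn n).measurableSpace :=
    hS.measurableSpace_mono (hSn n) fun ω =>
      WithTop.coe_le_coe.mpr (le_min (le_dyadicCeil n (S ω)) (hSb ω))
  have hle n := (hSn n).measurableSpace_le_of_le (hSnb n)
  set g : ℕ → Ω → ℝ := fun n => P[f b | (hSn n).measurableSpace]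
  have hg n : (fun ω => f (Sn n ω) ω) =ᵐ[P] g n := by
    refine hf.stoppedValue_ae_eq_condExp_of_le_const_of_countable_range (hSn n) (hSnb n) ?_
    refine (((countable_range_dyadicCeil n).image fun x => min x b).image
      fun x : ℝ => (x : WithTop ℝ)).mono ?_
    rintro _ ⟨ω, rfl⟩
    exact ⟨_, ⟨_, ⟨S ω, rfl⟩, rfl⟩, rfl⟩
  have hconv : ∀ᵐ ω ∂P, Tendsto (fun n => g n ω) atTop (𝓝 (f (S ω) ω)) := by
    filter_upwards [ae_all_iff.mpr hg] with ω hω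
    have hSn_conv : Tendsto (fun n => Sn n ω) atTop (𝓝 (S ω)) := by
      simpa only [min_eq_left (hSb ω)] using
        (tendsto_dyadicCeil (S ω)).min (tendsto_const_nhds (x := b))
    exact (((hfc ω).tendsto (S ω)).comp hSn_conv).congr hω
  have hui := (hf.integrable b).uniformIntegrable_condExp hle
  have hint : Integrable (fun ω => f (S ω) ω) P := hui.integrable_of_ae_tendsto hconv
  have hL1 := tendsto_Lp_finite_of_tendsto_ae le_rfl ENNReal.one_ne_top (fun n => hui.1 n)
    (memLp_one_iff_integrable.mpr hint) hui.2.1 hconv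
  refine ae_eq_condExp_of_forall_setIntegral_eq (hS.measurableSpace_le_of_le fun ω =>
      WithTop.coe_le_coe.mpr (hSb ω)) (hf.integrable b) (fun s _ _ => hint.integrableOn)
    (fun s hs _ => ?_) ?_
  · refine tendsto_nhds_unique (tendsto_setIntegral_of_L1' _ hint.1
      (Eventually.of_forall fun n => integrable_condExp) hL1 s) ?_
    exact tendsto_const_nhds.congr fun n =>
      (setIntegral_condExp (hle n) (hf.integrable b) (hSSn n s hs)).symm
  · exact (hf.stronglyAdapted.stronglyMeasurable_comp_of_continuous hfc hS).aestronglyMeasurable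

theorem integrable_comp_of_continuous (hf : Martingale f ℱ P)
    (hfc : ∀ ω, Continuous fun t => f t ω) (hS : IsStoppingTime ℱ fun ω => (S ω : WithTop ℝ))
    (hSb : ∀ ω, S ω ≤ b) : Integrable (fun ω => f (S ω) ω) P :=
  integrable_condExp.congr (hf.stoppedValue_ae_eq_condExp_of_continuous hfc hS hSb).symm

theorem integral_mul_comp_eq_of_continuous (hf : Martingale f ℱ P)
    (hfc : ∀ ω, Continuous fun t => f t ω) (hS : IsStoppingTime ℱ fun ω => (S ω : WithTop ℝ))
    (hSb : ∀ ω, S ω ≤ b) {Y : Ω → ℝ} (hY : StronglyMeasurable[hS.measurableSpace] Y) {c : ℝ}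
    (hYc : ∀ ω, |Y ω| ≤ c) :
    ∫ ω, Y ω * f (S ω) ω ∂P = ∫ ω, Y ω * f b ω ∂P := by
  have hm := hS.measurableSpace_le_of_le fun ω => WithTop.coe_le_coe.mpr (hSb ω)
  have hYf : Integrable (Y * f b) P :=
    (hf.integrable b).bdd_mul (hY.mono hm).aestronglyMeasurable (.of_forall hYc)
  calc ∫ ω, Y ω * f (S ω) ω ∂P = ∫ ω, (Y * P[f b | hS.measurableSpace]) ω ∂P :=
        integral_congr_ae
          ((hf.stoppedValue_ae_eq_condExp_of_continuous hfc hS hSb).mul_left (f₃ := Y))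
    _ = ∫ ω, P[Y * f b | hS.measurableSpace] ω ∂P :=
        integral_congr_ae (condExp_mul_of_stronglyMeasurable_left hY hYf (hf.integrable b)).symm
    _ = ∫ ω, Y ω * f b ω ∂P := integral_condExp hm

theorem integral_mul_sub_comp_eq_zero_of_continuous (hf : Martingale f ℱ P)
    (hfc : ∀ ω, Continuous fun t => f t ω) (hS : IsStoppingTime ℱ fun ω => (S ω : WithTop ℝ))
    (hR : IsStoppingTime ℱ fun ω => (R ω : WithTop ℝ)) (hSR : ∀ ω, S ω ≤ R ω)
    (hRb : ∀ ω, R ω ≤ b) {Y : Ω → ℝ} (hY : StronglyMeasurable[hS.measurableSpace] Y) {c : ℝ}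
    (hYc : ∀ ω, |Y ω| ≤ c) :
    ∫ ω, Y ω * (f (R ω) ω - f (S ω) ω) ∂P = 0 := by
  have hSb ω := (hSR ω).trans (hRb ω)
  have hYR : StronglyMeasurable[hR.measurableSpace] Y :=
    hY.mono (hS.measurableSpace_mono hR fun ω => WithTop.coe_le_coe.mpr (hSR ω))
  have hYm : AEStronglyMeasurable Y P := (hY.mono (hS.measurableSpace_le_of_le fun ω =>
    WithTop.coe_le_coe.mpr (hSb ω))).aestronglyMeasurable
  simp_rw [mul_sub]
  rw [integral_sub ((hf.integrable_comp_of_continuous hfc hR hRb).bdd_mul hYm (.of_forall hYc))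
      ((hf.integrable_comp_of_continuous hfc hS hSb).bdd_mul hYm (.of_forall hYc)),
    hf.integral_mul_comp_eq_of_continuous hfc hR hRb hYR hYc,
    hf.integral_mul_comp_eq_of_continuous hfc hS hSb hY hYc, sub_self]

end MeasureTheory.Martingale

section FirstHit

def firstHit (φ : ℝ → ℝ) (c a cap : ℝ) : ℝ := sInf ({t ∈ Icc a cap | c ≤ φ t} ∪ {cap})

variable {φ : ℝ → ℝ} {c a cap : ℝ}

lemma bddBelow_firstHit_set (h : a ≤ cap) : BddBelow ({t ∈ Icc a cap | c ≤ φ t} ∪ {cap}) :=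
  ⟨a, by rintro t (⟨ht, -⟩ | rfl) <;> [exact ht.1; exact h]⟩

lemma le_firstHit (h : a ≤ cap) : a ≤ firstHit φ c a cap :=
  le_csInf (by simp) (by rintro t (⟨ht, -⟩ | rfl) <;> [exact ht.1; exact h])

lemma firstHit_le_cap (h : a ≤ cap) : firstHit φ c a cap ≤ cap :=
  csInf_le (bddBelow_firstHit_set h) (by simp)

lemma firstHit_le {u : ℝ} (hu : u ∈ Icc a cap) (hcu : c ≤ φ u) : firstHit φ c a cap ≤ u :=
  csInf_le (bddBelow_firstHit_set (hu.1.trans hu.2)) (Or.inl ⟨hu, hcu⟩)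

lemma lt_of_lt_firstHit (h : a ≤ cap) {t : ℝ} (hat : a ≤ t) (ht : t < firstHit φ c a cap) :
    φ t < c := by
  by_contra! hct
  exact (firstHit_le ⟨hat, ht.le.trans (firstHit_le_cap h)⟩ hct).not_gt ht

lemma le_apply_firstHit (hφ : Continuous φ) (h : ∃ u ∈ Icc a cap, c ≤ φ u) :
    c ≤ φ (firstHit φ c a cap) := by
  set A := {t ∈ Icc a cap | c ≤ φ t}
  have hAne : A.Nonempty := let ⟨u, hu, hcu⟩ := h; ⟨u, hu, hcu⟩
  have hAbdd : BddBelow A := ⟨a, fun t ht => ht.1.1⟩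
  have hmem : sInf A ∈ A :=
    (isClosed_Icc.inter (isClosed_le continuous_const hφ)).csInf_mem hAne hAbdd
  have hA : firstHit φ c a cap = sInf A := by
    rw [firstHit, csInf_union hAbdd hAne (bddBelow_singleton) (singleton_nonempty _),
      csInf_singleton, min_eq_left hmem.1.2]
  exact hA ▸ hmem.2

lemma le_apply_firstHit_of_lt_cap (hφ : Continuous φ)
    (hlt : firstHit φ c a cap < cap) : c ≤ φ (firstHit φ c a cap) := by
  refine le_apply_firstHit hφ ?_
  by_contra! hnone
  have hempty : {t ∈ Icc a cap | c ≤ φ t} = ∅ :=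
    eq_empty_of_forall_notMem fun t ht => (hnone t ht.1).not_ge ht.2
  exact hlt.ne (by rw [firstHit, hempty, empty_union, csInf_singleton])

lemma apply_le_of_mem_Icc_firstHit (hφ : Continuous φ) (h : a ≤ cap) (ha : φ a ≤ c) {t : ℝ}
    (ht : t ∈ Icc a (firstHit φ c a cap)) : φ t ≤ c := by
  rcases ht.1.eq_or_lt with rfl | hat
  · exact ha
  rcases ht.2.lt_or_eq with hlt | rfl
  · exact (lt_of_lt_firstHit h ht.1 hlt).le
  -- at the hitting time itself, pass to the limit from the left
  refine le_of_tendsto (hφ.continuousWithinAt (s := Iio (firstHit φ c a cap))) ?_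
  filter_upwards [Ioo_mem_nhdsLT hat] with s hs
  exact (lt_of_lt_firstHit h hs.1.le hs.2).le

lemma firstHit_le_iff (hφ : Continuous φ) (h : a ≤ cap) {t : ℝ} (ht : t < cap) :
    firstHit φ c a cap ≤ t ↔ a ≤ t ∧ ∃ s ∈ Icc a t, c ≤ φ s := by
  constructor
  · intro hle
    have hat := (le_firstHit h).trans hle
    exact ⟨hat, _, ⟨le_firstHit h, hle⟩, le_apply_firstHit_of_lt_cap hφ (hle.trans_lt ht)⟩
  · rintro ⟨-, s, hs, hcs⟩
    exact (firstHit_le ⟨hs.1, hs.2.trans ht.le⟩ hcs).trans hs.2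

lemma exists_le_apply_iff_le_iSup_rat (hφ : Continuous φ) {t : ℝ} (hat : a ≤ t) :
    (∃ s ∈ Icc a t, c ≤ φ s) ↔ c ≤ ⨆ q : ℚ, φ (min (max a q) t) := by
  have hclamp (x : ℝ) : min (max a x) t ∈ Icc a t :=
    ⟨le_min (le_max_left _ _) hat, min_le_right _ _⟩
  obtain ⟨s₀, hs₀, hmax⟩ := isCompact_Icc.exists_isMaxOn (nonempty_Icc.mpr hat) hφ.continuousOn
  have hbdd : BddAbove (range fun q : ℚ => φ (min (max a q) t)) :=
    ⟨φ s₀, by rintro _ ⟨q, rfl⟩; exact hmax (hclamp q)⟩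
  constructor
  · rintro ⟨s, hs, hcs⟩
    -- `φ ∘ clamp` is continuous, so its value at `s` is a limit of its values at rationals
    have hle : φ (min (max a s) t) ≤ ⨆ q : ℚ, φ (min (max a q) t) :=
      Rat.denseRange_cast.induction_on s
        (isClosed_le (hφ.comp ((continuous_const.max continuous_id).min continuous_const))
          continuous_const)
        fun q => le_ciSup hbdd q
    rw [max_eq_right hs.1, min_eq_left hs.2] at hle
    exact hcs.trans hle
  · exact fun hc => ⟨s₀, hs₀, hc.trans (ciSup_le fun q => hmax (hclamp q))⟩

end FirstHit

section HittingFrom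

variable {Ω E : Type*} {m : MeasurableSpace Ω} {ℱ : Filtration ℝ m} [TopologicalSpace E]

def hittingFrom (X : ℝ → Ω → E) (G : E → E → ℝ) (c : ℝ) (S : Ω → ℝ) (cap : ℝ) (ω : Ω) : ℝ :=
  firstHit (fun t => G (X t ω) (X (S ω) ω)) c (S ω) cap

lemma isStoppingTime_hittingFrom [TopologicalSpace.PseudoMetrizableSpace E] {X : ℝ → Ω → E}
    (hXa : StronglyAdapted ℱ X) (hXc : ∀ ω, Continuous fun t => X t ω) {G : E → E → ℝ}
    (hG : Continuous (Function.uncurry G)) (c : ℝ) {S : Ω → ℝ}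
    (hS : IsStoppingTime ℱ fun ω => (S ω : WithTop ℝ)) {cap : ℝ} (hScap : ∀ ω, S ω ≤ cap) :
    IsStoppingTime ℱ fun ω => (hittingFrom X G c S cap ω : WithTop ℝ) := by
  have hprog := hXa.isStronglyProgressive_of_continuous hXc
  have hφ ω : Continuous fun t => G (X t ω) (X (S ω) ω) :=
    hG.comp ((hXc ω).prodMk continuous_const)
  refine isStoppingTime_coe_iff.mpr fun t => ?_
  rcases le_or_gt cap t with hcap | hcap
  · have hall : {ω | hittingFrom X G c S cap ω ≤ t} = univ :=
      eq_univ_of_forall fun ω => (firstHit_le_cap (hScap ω)).trans hcap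
    exact hall ▸ MeasurableSet.univ
  -- by continuity, `{hittingFrom ≤ t}` is decided by the values at the countably many
  -- `ℱ t`-stopping times `min (max S q) t`, `q ∈ ℚ`
  set V : ℚ → Ω → ℝ := fun q ω => G (X (min (max (S ω) q) t) ω) (X (min (S ω) t) ω)
  have hV q : Measurable[ℱ t] (V q) := by
    have hle ω : ((min (max (S ω) q) t : ℝ) : WithTop ℝ) ≤ t :=
      WithTop.coe_le_coe.mpr (min_le_right _ _)
    have hle' ω : ((min (S ω) t : ℝ) : WithTop ℝ) ≤ t :=
      WithTop.coe_le_coe.mpr (min_le_right _ _)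
    have h1 := stronglyMeasurable_stoppedValue_of_le hprog
      ((hS.coe_max (isStoppingTime_const ℱ (q : ℝ))).coe_min (isStoppingTime_const ℱ t)) hle
    have h2 := stronglyMeasurable_stoppedValue_of_le hprog
      (hS.coe_min (isStoppingTime_const ℱ t)) hle'
    exact (hG.comp_stronglyMeasurable (h1.prodMk h2)).measurable
  have hset : {ω | hittingFrom X G c S cap ω ≤ t} = {ω | S ω ≤ t} ∩ {ω | c ≤ ⨆ q, V q ω} := by
    ext ω
    simp only [mem_ofPred_eq, mem_inter_iff, hittingFrom,
      firstHit_le_iff (hφ ω) (hScap ω) hcap]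
    refine and_congr_right fun hSt => ?_
    rw [exists_le_apply_iff_le_iSup_rat (hφ ω) hSt]
    simp only [V, min_eq_left hSt]
  rw [hset]
  exact (isStoppingTime_coe_iff.mp hS t).inter
    (measurableSet_le measurable_const (Measurable.iSup hV))

end HittingFrom

section OscillationPartition

variable {Ω E : Type*} {m : MeasurableSpace Ω} {ℱ : Filtration ℝ m} [PseudoMetricSpace E]
  {X : ℝ → Ω → E} {U : Ω → ℝ} {cap ε : ℝ}

def oscPartition (X : ℝ → Ω → E) (U : Ω → ℝ) (cap ε : ℝ) : ℕ → Ω → ℝ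
  | 0 => fun _ => 0
  | k + 1 => fun ω => min (U ω) (hittingFrom X dist ε (oscPartition X U cap ε k) cap ω)

variable (hU0 : ∀ ω, 0 ≤ U ω) (hUcap : ∀ ω, U ω ≤ cap)
include hU0 hUcap

lemma oscPartition_mem_Icc (k : ℕ) (ω : Ω) : oscPartition X U cap ε k ω ∈ Icc 0 (U ω) := by
  induction k with
  | zero => exact ⟨le_rfl, hU0 ω⟩
  | succ k ih =>
    exact ⟨le_min (hU0 ω) (ih.1.trans (le_firstHit (ih.2.trans (hUcap ω)))), min_le_left _ _⟩

lemma oscPartition_le_succ (k : ℕ) (ω : Ω) :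
    oscPartition X U cap ε k ω ≤ oscPartition X U cap ε (k + 1) ω :=
  have h := oscPartition_mem_Icc hU0 hUcap (X := X) (ε := ε) k ω
  le_min h.2 (le_firstHit (h.2.trans (hUcap ω)))

lemma isStoppingTime_oscPartition (hXa : StronglyAdapted ℱ X)
    (hXc : ∀ ω, Continuous fun t => X t ω) (hU : IsStoppingTime ℱ fun ω => (U ω : WithTop ℝ))
    (k : ℕ) : IsStoppingTime ℱ fun ω => (oscPartition X U cap ε k ω : WithTop ℝ) := by
  induction k with
  | zero => exact isStoppingTime_const ℱ 0
  | succ k ih =>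
    exact hU.coe_min (isStoppingTime_hittingFrom hXa hXc continuous_dist ε ih
      fun ω => (oscPartition_mem_Icc hU0 hUcap k ω).2.trans (hUcap ω))

lemma dist_oscPartition_succ_le (hXc : ∀ ω, Continuous fun t => X t ω) (hε : 0 ≤ ε) (k : ℕ)
    (ω : Ω) : dist (X (oscPartition X U cap ε (k + 1) ω) ω) (X (oscPartition X U cap ε k ω) ω)
      ≤ ε := by
  have h := oscPartition_mem_Icc hU0 hUcap (X := X) (ε := ε) k ω
  refine apply_le_of_mem_Icc_firstHit (φ := fun t => dist (X t ω) _)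
    ((hXc ω).dist continuous_const) (h.2.trans (hUcap ω)) (by simpa using hε)
    ⟨oscPartition_le_succ hU0 hUcap k ω, min_le_right _ _⟩

lemma dist_oscPartition_le (hXc : ∀ ω, Continuous fun t => X t ω) (hε : 0 ≤ ε) (k : ℕ)
    (ω : Ω) : dist (X (oscPartition X U cap ε k ω) ω) (X 0 ω) ≤ k * ε := by
  induction k with
  | zero => simp [oscPartition]
  | succ k ih =>
    push_cast
    linarith [dist_triangle (X (oscPartition X U cap ε (k + 1) ω) ω)
      (X (oscPartition X U cap ε k ω) ω) (X 0 ω),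
      dist_oscPartition_succ_le hU0 hUcap hXc hε k ω]

/-- By uniform continuity each step of the partition before `U` has length at least some
`δ > 0`, so the partition reaches `U` after finitely many steps. -/
lemma eventually_oscPartition_eq (hXc : ∀ ω, Continuous fun t => X t ω) (hε : 0 < ε)
    (ω : Ω) : ∀ᶠ k in atTop, oscPartition X U cap ε k ω = U ω := by
  set T := oscPartition X U cap ε
  obtain ⟨δ, hδ, hunif⟩ := Metric.uniformContinuousOn_iff.mp
    (isCompact_Icc.uniformContinuousOn_of_continuous (hXc ω).continuousOn) ε hε
  have hstep k (hlt : T (k + 1) ω < U ω) : T k ω + δ ≤ T (k + 1) ω := by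
    have hk := oscPartition_mem_Icc hU0 hUcap (X := X) (ε := ε) k ω
    have hhit : T (k + 1) ω = hittingFrom X dist ε (T k) cap ω :=
      min_eq_right (not_le.mp fun h => hlt.ne (min_eq_left h)).le
    have hhit_lt : hittingFrom X dist ε (T k) cap ω < cap := hhit ▸ hlt.trans_le (hUcap ω)
    have hfar : ε ≤ dist (X (T (k + 1) ω) ω) (X (T k ω) ω) := by
      rw [hhit]
      exact le_apply_firstHit_of_lt_cap ((hXc ω).dist continuous_const) hhit_lt
    have hk1 := oscPartition_mem_Icc hU0 hUcap (X := X) (ε := ε) (k + 1) ω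
    by_contra! hnear
    refine hfar.not_gt (hunif _ ⟨hk1.1, hk1.2.trans (hUcap ω)⟩ _ ⟨hk.1, hk.2.trans (hUcap ω)⟩ ?_)
    rw [Real.dist_eq, abs_of_nonneg (sub_nonneg.mpr (oscPartition_le_succ hU0 hUcap k ω))]
    linarith
  have hlow (k : ℕ) : min (U ω) (k * δ) ≤ T k ω := by
    induction k with
    | zero => exact (min_le_right _ _).trans (by simp [T, oscPartition])
    | succ k ih =>
      rcases (oscPartition_mem_Icc hU0 hUcap (X := X) (ε := ε) (k + 1) ω).2.eq_or_lt with heq | hlt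
      · exact heq ▸ min_le_left _ _
      · have := hstep k hlt
        push_cast
        rcases le_total (U ω) (k * δ) with h | h
        · rw [min_eq_left h] at ih; exact (min_le_left _ _).trans (by linarith)
        · rw [min_eq_right h] at ih; exact (min_le_right _ _).trans (by linarith)
  filter_upwards [eventually_ge_atTop ⌈cap / δ⌉₊] with k hk
  have hcap : U ω ≤ k * δ := by
    calc U ω ≤ cap := hUcap ω
      _ ≤ ⌈cap / δ⌉₊ * δ := (div_le_iff₀ hδ).mp (Nat.le_ceil _)
      _ ≤ k * δ := by gcongr
  exact le_antisymm (oscPartition_mem_Icc hU0 hUcap k ω).2 (min_eq_left hcap ▸ hlow k)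

end OscillationPartition

section QuadraticVariation

variable {Ω : Type*} {m : MeasurableSpace Ω}

structure IsQuadraticVariation (ℱ : Filtration ℝ m) (P : Measure Ω) (M Q : ℝ → Ω → ℝ) : Prop where
  martingale : Martingale M ℱ P
  continuous : ∀ ω, Continuous fun t => M t ω
  martingale_sq_sub : Martingale (fun t ω => M t ω ^ 2 - Q t ω) ℱ P
  continuous_qv : ∀ ω, Continuous fun t => Q t ω
  monotone_qv : ∀ ω, Monotone fun t => Q t ω
  qv_zero : ∀ ω, Q 0 ω = 0

/-- The stochastic exponential `ℰ(θ M)_t` when `Q = [M]`. -/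
def stochasticExp (θ : ℝ) (M Q : ℝ → Ω → ℝ) (t : ℝ) (ω : Ω) : ℝ :=
  Real.exp (θ * M t ω - θ ^ 2 / 2 * Q t ω)

namespace IsQuadraticVariation

variable {ℱ : Filtration ℝ m} {P : Measure Ω} {M Q : ℝ → Ω → ℝ}

lemma continuous_sq_sub (hMQ : IsQuadraticVariation ℱ P M Q) (ω : Ω) :
    Continuous fun t => M t ω ^ 2 - Q t ω :=
  ((hMQ.continuous ω).pow 2).sub (hMQ.continuous_qv ω)

lemma stronglyAdapted_qv (hMQ : IsQuadraticVariation ℱ P M Q) : StronglyAdapted ℱ Q := by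
  intro t
  have hM := hMQ.martingale.stronglyAdapted t
  convert (hM.mul hM).sub (hMQ.martingale_sq_sub.stronglyAdapted t) using 1
  ext ω
  simp [sq]

lemma qv_nonneg (hMQ : IsQuadraticVariation ℱ P M Q) {t : ℝ} (ht : 0 ≤ t) (ω : Ω) :
    0 ≤ Q t ω :=
  hMQ.qv_zero ω ▸ hMQ.monotone_qv ω ht

lemma integrable_qv (hMQ : IsQuadraticVariation ℱ P M Q) {t : ℝ} (hMt : MemLp (M t) 2 P) :
    Integrable (Q t) P := by
  convert hMt.integrable_sq.sub (hMQ.martingale_sq_sub.integrable t) using 1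
  ext ω
  simp

lemma aestronglyMeasurable_comp (hMQ : IsQuadraticVariation ℱ P M Q) {S : Ω → ℝ}
    (hS : IsStoppingTime ℱ fun ω => (S ω : WithTop ℝ)) :
    AEStronglyMeasurable (fun ω => M (S ω) ω) P :=
  ((hMQ.martingale.stronglyAdapted.stronglyMeasurable_comp_of_continuous hMQ.continuous
    hS).mono hS.measurableSpace_le).aestronglyMeasurable

lemma aestronglyMeasurable_qv_comp (hMQ : IsQuadraticVariation ℱ P M Q) {S : Ω → ℝ}
    (hS : IsStoppingTime ℱ fun ω => (S ω : WithTop ℝ)) :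
    AEStronglyMeasurable (fun ω => Q (S ω) ω) P :=
  ((hMQ.stronglyAdapted_qv.stronglyMeasurable_comp_of_continuous hMQ.continuous_qv
    hS).mono hS.measurableSpace_le).aestronglyMeasurable

lemma stronglyAdapted_prod (hMQ : IsQuadraticVariation ℱ P M Q) :
    StronglyAdapted ℱ fun t ω => (M t ω, Q t ω) :=
  fun t => (hMQ.martingale.stronglyAdapted t).prodMk (hMQ.stronglyAdapted_qv t)

lemma continuous_prod (hMQ : IsQuadraticVariation ℱ P M Q) (ω : Ω) :
    Continuous fun t => (M t ω, Q t ω) :=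
  (hMQ.continuous ω).prodMk (hMQ.continuous_qv ω)

lemma stronglyMeasurable_stochasticExp_comp (hMQ : IsQuadraticVariation ℱ P M Q) (θ : ℝ)
    {S : Ω → ℝ} (hS : IsStoppingTime ℱ fun ω => (S ω : WithTop ℝ)) :
    StronglyMeasurable[hS.measurableSpace] fun ω => stochasticExp θ M Q (S ω) ω :=
  Real.continuous_exp.comp_stronglyMeasurable
    (((hMQ.martingale.stronglyAdapted.stronglyMeasurable_comp_of_continuous hMQ.continuous
      hS).const_mul θ).sub
      ((hMQ.stronglyAdapted_qv.stronglyMeasurable_comp_of_continuous hMQ.continuous_qv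
        hS).const_mul _))

end IsQuadraticVariation

end QuadraticVariation

namespace IsQuadraticVariation

variable {Ω : Type*} {m : MeasurableSpace Ω} {ℱ : Filtration ℝ m} {P : Measure Ω}
  [IsFiniteMeasure P] {M Q : ℝ → Ω → ℝ} {S R : Ω → ℝ} {b : ℝ}

/-- With `N = M² - [M]`, `(M_R - M_S)² = (N_R - N_S) - 2 M_S (M_R - M_S) + ([M]_R - [M]_S)`, and
optional sampling for `N` and for `M` kills the first two terms against `Y`. -/
lemma integral_mul_sq_sub_eq (hMQ : IsQuadraticVariation ℱ P M Q)
    (hS : IsStoppingTime ℱ fun ω => (S ω : WithTop ℝ))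
    (hR : IsStoppingTime ℱ fun ω => (R ω : WithTop ℝ)) (hSR : ∀ ω, S ω ≤ R ω)
    (hRb : ∀ ω, R ω ≤ b) {Y : Ω → ℝ} (hY : StronglyMeasurable[hS.measurableSpace] Y) {c : ℝ}
    (hYc : ∀ ω, |Y ω| ≤ c) {K ε : ℝ} (hMS : ∀ ω, |M (S ω) ω| ≤ K)
    (hD : ∀ ω, |M (R ω) ω - M (S ω) ω| ≤ ε) :
    ∫ ω, Y ω * (M (R ω) ω - M (S ω) ω) ^ 2 ∂P = ∫ ω, Y ω * (Q (R ω) ω - Q (S ω) ω) ∂P := by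
  have hSb ω := (hSR ω).trans (hRb ω)
  have hYm : AEStronglyMeasurable Y P := (hY.mono hS.measurableSpace_le).aestronglyMeasurable
  have hMS_meas := hMQ.martingale.stronglyAdapted.stronglyMeasurable_comp_of_continuous
    hMQ.continuous hS
  have hDm := (hMQ.aestronglyMeasurable_comp hR).sub (hMQ.aestronglyMeasurable_comp hS)
  have hYMS ω : |Y ω * M (S ω) ω| ≤ c * K := abs_mul_le_of_abs_le (hYc ω) (hMS ω)
  have hN := hMQ.martingale_sq_sub
  have hN0 := hN.integral_mul_sub_comp_eq_zero_of_continuous hMQ.continuous_sq_sub hS hR hSR hRb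
    hY hYc
  have hM0 := hMQ.martingale.integral_mul_sub_comp_eq_zero_of_continuous hMQ.continuous hS hR
    hSR hRb (Y := fun ω => Y ω * M (S ω) ω) (hY.mul hMS_meas) hYMS
  have hD2int : Integrable (fun ω => Y ω * (M (R ω) ω - M (S ω) ω) ^ 2) P :=
    .of_bound (hYm.mul (hDm.pow 2)) (c * ε ^ 2) <| .of_forall fun ω =>
      abs_mul_le_of_abs_le (hYc ω) (by rw [abs_pow]; exact pow_le_pow_left₀ (abs_nonneg _) (hD ω) 2)
  have hNint : Integrable (fun ω => Y ω * ((M (R ω) ω ^ 2 - Q (R ω) ω) -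
      (M (S ω) ω ^ 2 - Q (S ω) ω))) P :=
    ((hN.integrable_comp_of_continuous hMQ.continuous_sq_sub hR hRb).sub
      (hN.integrable_comp_of_continuous hMQ.continuous_sq_sub hS hSb)).bdd_mul hYm
      (.of_forall hYc)
  have hMint : Integrable (fun ω => Y ω * M (S ω) ω * (M (R ω) ω - M (S ω) ω)) P :=
    .of_bound ((hYm.mul (hMQ.aestronglyMeasurable_comp hS)).mul hDm) (c * K * ε) <|
      .of_forall fun ω => abs_mul_le_of_abs_le (hYMS ω) (hD ω)
  have hpt : (fun ω => Y ω * (Q (R ω) ω - Q (S ω) ω)) = fun ω =>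
      (Y ω * (M (R ω) ω - M (S ω) ω) ^ 2 -
        Y ω * ((M (R ω) ω ^ 2 - Q (R ω) ω) - (M (S ω) ω ^ 2 - Q (S ω) ω))) +
      2 * (Y ω * M (S ω) ω * (M (R ω) ω - M (S ω) ω)) := by
    ext ω; ring
  rw [hpt, integral_add (hD2int.sub hNint : Integrable (fun ω => _ - _) P) (hMint.const_mul 2),
    integral_sub hD2int hNint, integral_const_mul, hN0, hM0]
  ring

lemma integrable_stochasticExp_comp (hMQ : IsQuadraticVariation ℱ P M Q)
    (hS : IsStoppingTime ℱ fun ω => (S ω : WithTop ℝ)) {θ g : ℝ}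
    (hg : ∀ ω, θ * M (S ω) ω - θ ^ 2 / 2 * Q (S ω) ω ≤ g) :
    Integrable (fun ω => stochasticExp θ M Q (S ω) ω) P :=
  .of_bound ((hMQ.stronglyMeasurable_stochasticExp_comp θ hS).mono
    hS.measurableSpace_le).aestronglyMeasurable (Real.exp g) <| .of_forall fun ω =>
      (abs_of_pos (Real.exp_pos _)).trans_le (Real.exp_le_exp.mpr (hg ω))

/-- One step of the discretised supermartingale argument. Writing `ℰ_R = ℰ_S exp (a - b)` with
`a = θ ΔM`, `b = θ² Δ[M] / 2`, optional sampling gives `∫ ℰ_S a = 0` and `∫ ℰ_S a² = 2 ∫ ℰ_S b`,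
so the second-order terms of `exp (a - b)` cancel up to `(1/2 + 4η) θ² + (5η - 1) θ² / 2
= 13/2 η θ²` times `∫ ℰ_S Δ[M]`. -/
lemma integral_stochasticExp_comp_le (hMQ : IsQuadraticVariation ℱ P M Q)
    (hS : IsStoppingTime ℱ fun ω => (S ω : WithTop ℝ))
    (hR : IsStoppingTime ℱ fun ω => (R ω : WithTop ℝ)) (hSR : ∀ ω, S ω ≤ R ω)
    (hRb : ∀ ω, R ω ≤ b) {θ g K ε : ℝ} (hθ : 0 < θ) (hε : 0 ≤ ε)
    (hθε : (θ + θ ^ 2 / 2) * ε ≤ 1 / 2)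
    (hg : ∀ ω, θ * M (S ω) ω - θ ^ 2 / 2 * Q (S ω) ω ≤ g) (hMS : ∀ ω, |M (S ω) ω| ≤ K)
    (hD : ∀ ω, |M (R ω) ω - M (S ω) ω| ≤ ε) (hΔQ : ∀ ω, Q (R ω) ω - Q (S ω) ω ≤ ε) :
    ∫ ω, stochasticExp θ M Q (R ω) ω ∂P ≤ ∫ ω, stochasticExp θ M Q (S ω) ω ∂P +
      13 / 2 * ((θ + θ ^ 2 / 2) * ε) * θ ^ 2 * Real.exp g *
        ∫ ω, (Q (R ω) ω - Q (S ω) ω) ∂P := by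
  set η := (θ + θ ^ 2 / 2) * ε
  set Y := fun ω => stochasticExp θ M Q (S ω) ω
  set D := fun ω => M (R ω) ω - M (S ω) ω
  set ΔQ := fun ω => Q (R ω) ω - Q (S ω) ω
  have hΔQ0 ω : 0 ≤ ΔQ ω := sub_nonneg.mpr (hMQ.monotone_qv ω (hSR ω))
  have hYc ω : |Y ω| ≤ Real.exp g :=
    (abs_of_pos (Real.exp_pos _)).trans_le (Real.exp_le_exp.mpr (hg ω))
  have hY := hMQ.stronglyMeasurable_stochasticExp_comp θ hS
  have hYm : AEStronglyMeasurable Y P := (hY.mono hS.measurableSpace_le).aestronglyMeasurable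
  have hDm : AEStronglyMeasurable D P :=
    (hMQ.aestronglyMeasurable_comp hR).sub (hMQ.aestronglyMeasurable_comp hS)
  have hΔQm : AEStronglyMeasurable ΔQ P :=
    (hMQ.aestronglyMeasurable_qv_comp hR).sub (hMQ.aestronglyMeasurable_qv_comp hS)
  have hpt ω : stochasticExp θ M Q (R ω) ω ≤ Y ω + θ * (Y ω * D ω) +
      (1 / 2 + 4 * η) * θ ^ 2 * (Y ω * D ω ^ 2) + (5 * η - 1) * (θ ^ 2 / 2) * (Y ω * ΔQ ω) := by
    have ha : |θ * D ω| ≤ η := by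
      rw [abs_mul, abs_of_pos hθ]
      show θ * |D ω| ≤ (θ + θ ^ 2 / 2) * ε
      nlinarith [mul_le_mul_of_nonneg_left (hD ω) hθ.le, mul_nonneg (sq_nonneg θ) hε]
    have hb : θ ^ 2 / 2 * ΔQ ω ≤ η := by
      show θ ^ 2 / 2 * ΔQ ω ≤ (θ + θ ^ 2 / 2) * ε
      nlinarith [mul_le_mul_of_nonneg_left (hΔQ ω) (sq_nonneg θ), mul_nonneg hθ.le hε]
    calc stochasticExp θ M Q (R ω) ω = Y ω * Real.exp (θ * D ω - θ ^ 2 / 2 * ΔQ ω) := by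
          simp only [Y, D, ΔQ, stochasticExp, ← Real.exp_add]
          ring_nf
      _ ≤ Y ω * (1 + θ * D ω + (1 / 2 + 4 * η) * (θ * D ω) ^ 2 +
            (5 * η - 1) * (θ ^ 2 / 2 * ΔQ ω)) :=
          mul_le_mul_of_nonneg_left (Real.exp_sub_le_second_order ha
            (mul_nonneg (by positivity) (hΔQ0 ω)) hb hθε) (Real.exp_pos _).le
      _ = _ := by ring
  have hint {f : Ω → ℝ} (hf : AEStronglyMeasurable f P) {C : ℝ} (hfC : ∀ ω, |f ω| ≤ C) :
      Integrable (fun ω => Y ω * f ω) P :=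
    .of_bound (hYm.mul hf) (Real.exp g * C) <| .of_forall fun ω =>
      abs_mul_le_of_abs_le (hYc ω) (hfC ω)
  have hYint : Integrable Y P := hMQ.integrable_stochasticExp_comp hS hg
  have hYD := hint hDm hD
  have hYD2 := hint (f := fun ω => D ω ^ 2) (hDm.pow 2) fun ω => by
    rw [abs_pow]; exact pow_le_pow_left₀ (abs_nonneg _) (hD ω) 2
  have hYΔQ := hint hΔQm fun ω => (abs_of_nonneg (hΔQ0 ω)).trans_le (hΔQ ω)
  have hYD_zero : ∫ ω, Y ω * D ω ∂P = 0 :=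
    hMQ.martingale.integral_mul_sub_comp_eq_zero_of_continuous hMQ.continuous hS hR hSR hRb hY
      hYc
  have hYD2_eq : ∫ ω, Y ω * D ω ^ 2 ∂P = ∫ ω, Y ω * ΔQ ω ∂P :=
    hMQ.integral_mul_sq_sub_eq hS hR hSR hRb hY hYc hMS hD
  have hYΔQ_le : ∫ ω, Y ω * ΔQ ω ∂P ≤ Real.exp g * ∫ ω, ΔQ ω ∂P := by
    rw [← integral_const_mul]
    exact integral_mono hYΔQ ((Integrable.of_bound hΔQm ε (.of_forall fun ω =>
      (abs_of_nonneg (hΔQ0 ω)).trans_le (hΔQ ω))).const_mul _) fun ω =>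
      mul_le_mul_of_nonneg_right (le_of_abs_le (hYc ω)) (hΔQ0 ω)
  have hsum₁ : Integrable (fun ω => Y ω + θ * (Y ω * D ω)) P := hYint.add (hYD.const_mul θ)
  have hsum₂ : Integrable (fun ω => Y ω + θ * (Y ω * D ω) +
      (1 / 2 + 4 * η) * θ ^ 2 * (Y ω * D ω ^ 2)) P := hsum₁.add (hYD2.const_mul _)
  have hsum₃ : Integrable (fun ω => Y ω + θ * (Y ω * D ω) +
      (1 / 2 + 4 * η) * θ ^ 2 * (Y ω * D ω ^ 2) + (5 * η - 1) * (θ ^ 2 / 2) * (Y ω * ΔQ ω)) P :=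
    hsum₂.add (hYΔQ.const_mul _)
  calc ∫ ω, stochasticExp θ M Q (R ω) ω ∂P
      ≤ ∫ ω, (Y ω + θ * (Y ω * D ω) + (1 / 2 + 4 * η) * θ ^ 2 * (Y ω * D ω ^ 2) +
          (5 * η - 1) * (θ ^ 2 / 2) * (Y ω * ΔQ ω)) ∂P :=
        integral_mono_of_nonneg (.of_forall fun ω => (Real.exp_pos _).le) hsum₃ (.of_forall hpt)
    _ = ∫ ω, Y ω ∂P + 13 / 2 * η * θ ^ 2 * ∫ ω, Y ω * ΔQ ω ∂P := by
        rw [integral_add hsum₂ (hYΔQ.const_mul _), integral_add hsum₁ (hYD2.const_mul _),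
          integral_add hYint (hYD.const_mul _), integral_const_mul, integral_const_mul,
          integral_const_mul, hYD_zero, hYD2_eq]
        ring
    _ ≤ _ := by
        rw [mul_assoc _ (Real.exp g)]
        gcongr

end IsQuadraticVariation

namespace IsQuadraticVariation

variable {Ω : Type*} {m : MeasurableSpace Ω} {ℱ : Filtration ℝ m} {P : Measure Ω}
  [IsProbabilityMeasure P] {M Q : ℝ → Ω → ℝ} {θ g cap ε : ℝ} {U : Ω → ℝ}

variable (hMQ : IsQuadraticVariation ℱ P M Q) (hM0 : ∀ ω, M 0 ω = 0) (hθ : 0 < θ)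
  (hU : IsStoppingTime ℱ fun ω => (U ω : WithTop ℝ)) (hU0 : ∀ ω, 0 ≤ U ω)
  (hUcap : ∀ ω, U ω ≤ cap)
  (hUg : ∀ ω, ∀ t ∈ Icc 0 (U ω), θ * M t ω - θ ^ 2 / 2 * Q t ω ≤ g)
include hMQ hM0 hθ hU hU0 hUcap hUg

lemma integral_stochasticExp_oscPartition_le (hε : 0 < ε) (hθε : (θ + θ ^ 2 / 2) * ε ≤ 1 / 2)
    (k : ℕ) :
    ∫ ω, stochasticExp θ M Q (oscPartition (fun t ω => (M t ω, Q t ω)) U cap ε k ω) ω ∂P ≤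
      1 + 13 / 2 * ((θ + θ ^ 2 / 2) * ε) * θ ^ 2 * Real.exp g *
        ∫ ω, Q (oscPartition (fun t ω => (M t ω, Q t ω)) U cap ε k ω) ω ∂P := by
  set T := oscPartition (fun t ω => (M t ω, Q t ω)) U cap ε
  have hT k := isStoppingTime_oscPartition hU0 hUcap hMQ.stronglyAdapted_prod hMQ.continuous_prod
    hU (ε := ε) k
  have hTmem k ω := oscPartition_mem_Icc hU0 hUcap (X := fun t ω => (M t ω, Q t ω)) (ε := ε) k ω
  have hstep k ω := dist_oscPartition_succ_le hU0 hUcap hMQ.continuous_prod hε.le k ω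
  have hbound k ω := dist_oscPartition_le hU0 hUcap hMQ.continuous_prod hε.le k ω
  simp only [Prod.dist_eq, Real.dist_eq, max_le_iff, hM0, hMQ.qv_zero, sub_zero] at hstep hbound
  have hQint k : Integrable (fun ω => Q (T k ω) ω) P :=
    .of_bound (hMQ.aestronglyMeasurable_qv_comp (hT k)) _ (.of_forall fun ω => (hbound k ω).2)
  induction k with
  | zero => simp [T, oscPartition, stochasticExp, hM0, hMQ.qv_zero]
  | succ k ih =>
    have hone := hMQ.integral_stochasticExp_comp_le (hT k) (hT (k + 1))
      (oscPartition_le_succ hU0 hUcap k) (fun ω => (hTmem (k + 1) ω).2.trans (hUcap ω)) hθ hε.le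
      hθε (fun ω => hUg ω _ (hTmem k ω)) (fun ω => (hbound k ω).1) (fun ω => (hstep k ω).1)
      (fun ω => (le_abs_self _).trans (hstep k ω).2)
    rw [integral_sub (hQint (k + 1)) (hQint k)] at hone
    linarith

lemma integral_stochasticExp_le_one_add (hQcap : Integrable (Q cap) P) (hε : 0 < ε)
    (hθε : (θ + θ ^ 2 / 2) * ε ≤ 1 / 2) :
    ∫ ω, stochasticExp θ M Q (U ω) ω ∂P ≤
      1 + 13 / 2 * ((θ + θ ^ 2 / 2) * ε) * θ ^ 2 * Real.exp g * ∫ ω, Q cap ω ∂P := by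
  set T := oscPartition (fun t ω => (M t ω, Q t ω)) U cap ε
  have hT k := isStoppingTime_oscPartition hU0 hUcap hMQ.stronglyAdapted_prod hMQ.continuous_prod
    hU (ε := ε) k
  have hTmem k ω := oscPartition_mem_Icc hU0 hUcap (X := fun t ω => (M t ω, Q t ω)) (ε := ε) k ω
  have hQ_le k : ∫ ω, Q (T k ω) ω ∂P ≤ ∫ ω, Q cap ω ∂P :=
    integral_mono_of_nonneg (.of_forall fun ω => hMQ.qv_nonneg (hTmem k ω).1 ω) hQcap
      (.of_forall fun ω => hMQ.monotone_qv ω ((hTmem k ω).2.trans (hUcap ω)))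
  have hZ_le k ω : |stochasticExp θ M Q (T k ω) ω| ≤ Real.exp g :=
    (abs_of_pos (Real.exp_pos _)).trans_le (Real.exp_le_exp.mpr (hUg ω _ (hTmem k ω)))
  have hlim : Tendsto (fun k => ∫ ω, stochasticExp θ M Q (T k ω) ω ∂P) atTop
      (𝓝 (∫ ω, stochasticExp θ M Q (U ω) ω ∂P)) :=
    tendsto_integral_of_dominated_convergence (fun _ => Real.exp g)
      (fun k => ((hMQ.stronglyMeasurable_stochasticExp_comp θ (hT k)).mono
        (hT k).measurableSpace_le).aestronglyMeasurable) (integrable_const _)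
      (fun k => .of_forall (hZ_le k)) <| .of_forall fun ω =>
        tendsto_nhds_of_eventually_eq <|
          (eventually_oscPartition_eq hU0 hUcap hMQ.continuous_prod hε ω).mono fun k hk => by
            simp only [T, hk]
  refine le_of_tendsto hlim (.of_forall fun k => ?_)
  refine (hMQ.integral_stochasticExp_oscPartition_le hM0 hθ hU hU0 hUcap hUg hε hθε k).trans ?_
  have hcoef : 0 ≤ 13 / 2 * ((θ + θ ^ 2 / 2) * ε) * θ ^ 2 * Real.exp g := by positivity
  exact add_le_add_right (mul_le_mul_of_nonneg_left (hQ_le k) hcoef) 1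

theorem integral_stochasticExp_le_one (hQcap : Integrable (Q cap) P) :
    ∫ ω, stochasticExp θ M Q (U ω) ω ∂P ≤ 1 := by
  set c := θ + θ ^ 2 / 2
  have hc : 0 < c := by positivity
  set A := 13 / 2 * c * θ ^ 2 * Real.exp g * ∫ ω, Q cap ω ∂P
  have hlim : Tendsto (fun ε => 1 + A * ε) (𝓝[>] 0) (𝓝 1) := by
    simpa using ((tendsto_const_nhds (x := (1 : ℝ))).add
      ((tendsto_id (x := 𝓝 (0 : ℝ))).const_mul A)).mono_left nhdsWithin_le_nhds
  refine ge_of_tendsto hlim ?_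
  filter_upwards [Ioo_mem_nhdsGT (show (0 : ℝ) < 1 / (2 * c) by positivity)] with ε hε
  have hθε : c * ε ≤ 1 / 2 := by
    have := hε.2.le
    rw [le_div_iff₀ (by positivity)] at this
    linarith
  exact (hMQ.integral_stochasticExp_le_one_add hM0 hθ hU hU0 hUcap hUg hQcap hε.1 hθε).trans_eq
    (by simp only [A, c]; ring)

end IsQuadraticVariation

section LevelStopping

variable {Ω : Type*} {m : MeasurableSpace Ω} {ℱ : Filtration ℝ m}

lemma exists_isStoppingTime_le_level {X : ℝ → Ω → ℝ} (hXa : StronglyAdapted ℱ X)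
    (hXc : ∀ ω, Continuous fun t => X t ω) {g : ℝ} (hX0 : ∀ ω, X 0 ω ≤ g) {τ : Ω → ℝ}
    (hτ : IsStoppingTime ℱ fun ω => (τ ω : WithTop ℝ)) (hτ0 : ∀ ω, 0 ≤ τ ω) {cap : ℝ}
    (hτcap : ∀ ω, τ ω ≤ cap) :
    ∃ U : Ω → ℝ, IsStoppingTime ℱ (fun ω => (U ω : WithTop ℝ)) ∧ (∀ ω, U ω ∈ Icc 0 (τ ω)) ∧
      (∀ ω, ∀ t ∈ Icc 0 (U ω), X t ω ≤ g) ∧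
      ∀ ω, (∃ u ∈ Icc 0 (τ ω), g ≤ X u ω) → g ≤ X (U ω) ω := by
  have hcap ω : (0 : ℝ) ≤ cap := (hτ0 ω).trans (hτcap ω)
  set ρ := hittingFrom X (fun x _ => x) g (fun _ => 0) cap
  have hρ : IsStoppingTime ℱ fun ω => (ρ ω : WithTop ℝ) :=
    isStoppingTime_hittingFrom hXa hXc continuous_fst g (isStoppingTime_const ℱ 0) hcap
  refine ⟨fun ω => min (ρ ω) (τ ω), hρ.coe_min hτ,
    fun ω => ⟨le_min (le_firstHit (hcap ω)) (hτ0 ω), min_le_right _ _⟩,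
    fun ω t ht => apply_le_of_mem_Icc_firstHit (hXc ω) (hcap ω) (hX0 ω)
      ⟨ht.1, ht.2.trans (min_le_left _ _)⟩, ?_⟩
  rintro ω ⟨u, hu, hgu⟩
  have hu' : u ∈ Icc 0 cap := ⟨hu.1, hu.2.trans (hτcap ω)⟩
  have hρτ : ρ ω ≤ τ ω := (firstHit_le hu' hgu).trans hu.2
  show g ≤ X (min (ρ ω) (τ ω)) ω
  rw [min_eq_left hρτ]
  exact le_apply_firstHit (hXc ω) ⟨u, hu', hgu⟩

end LevelStopping

lemma bernstein_level_le {β C ℓ s q : ℝ} (hβ : 0 ≤ β) (hC : 0 < C) (hℓ : 0 < ℓ) (hs : ℓ < s)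
    (hq : q ≤ β * s + C) :
    ℓ ^ 2 / (2 * (β * ℓ + C)) ≤
      ℓ / (β * ℓ + C) * s - (ℓ / (β * ℓ + C)) ^ 2 / 2 * q := by
  have hK : 0 < β * ℓ + C := by positivity
  set θ := ℓ / (β * ℓ + C)
  have hθ : 0 < θ := by positivity
  have hθβ : θ * β ≤ 1 := by
    rw [div_mul_eq_mul_div, div_le_one hK]
    linarith
  have hkey : θ * s - θ ^ 2 / 2 * (β * s + C) - ℓ ^ 2 / (2 * (β * ℓ + C)) =
      (s - ℓ) * (θ * (1 - θ * β / 2)) := by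
    simp only [θ]
    field_simp
    ring
  have : 0 ≤ (s - ℓ) * (θ * (1 - θ * β / 2)) :=
    mul_nonneg (by linarith) (mul_nonneg hθ.le (by linarith))
  nlinarith [mul_le_mul_of_nonneg_left hq (by positivity : (0 : ℝ) ≤ θ ^ 2 / 2)]

lemma measure_exp_le_le_ofReal_exp_neg {Ω : Type*} {m : MeasurableSpace Ω} {P : Measure Ω}
    [IsFiniteMeasure P] {Z : Ω → ℝ} (hZ0 : ∀ ω, 0 ≤ Z ω) (hZ : Integrable Z P)
    (hZ1 : ∫ ω, Z ω ∂P ≤ 1) (g : ℝ) :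
    P {ω | Real.exp g ≤ Z ω} ≤ ENNReal.ofReal (Real.exp (-g)) := by
  have hmarkov := (mul_meas_ge_le_integral_of_nonneg (.of_forall hZ0) hZ (Real.exp g)).trans hZ1
  rw [← ofReal_measureReal]
  refine ENNReal.ofReal_le_ofReal ?_
  calc P.real {ω | Real.exp g ≤ Z ω}
      = Real.exp (-g) * (Real.exp g * P.real {ω | Real.exp g ≤ Z ω}) := by
        rw [← mul_assoc, ← Real.exp_add, neg_add_cancel, Real.exp_zero, one_mul]
    _ ≤ Real.exp (-g) := mul_le_of_le_one_right (Real.exp_pos _).le hmarkov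

end

/-- generalized Bernstein inequality: let `M` be a real, continuous, square
integrable martingale with `M 0 = 0` and quadratic variation `[M] = Q` (characterized by:
`M² - Q` is a martingale, `Q` is continuous, nondecreasing, `Q 0 = 0`). For `β ≥ 0`,
`C > 0`, any bounded stopping time `τ` and any `ℓ > 0`,
`P( sup_{t ≤ τ} M_t > ℓ , [M]_τ ≤ β sup_{t ≤ τ} M_t + C ) ≤ exp(-ℓ²/(2(βℓ + C)))`. -/
theorem stmt_7 {Ω : Type*} {m : MeasurableSpace Ω} {P : Measure Ω} [IsProbabilityMeasure P]
    (ℱ : Filtration ℝ m) (M Q : ℝ → Ω → ℝ)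
    (hM : Martingale M ℱ P)
    (hMcont : ∀ ω, Continuous fun t => M t ω)
    (hM0 : ∀ ω, M 0 ω = 0)
    (hML2 : ∀ t, MemLp (M t) 2 P)
    (hQV : Martingale (fun t ω => (M t ω) ^ 2 - Q t ω) ℱ P)
    (hQcont : ∀ ω, Continuous fun t => Q t ω)
    (hQmono : ∀ ω, Monotone fun t => Q t ω)
    (hQ0 : ∀ ω, Q 0 ω = 0)
    (β C : ℝ) (hβ : 0 ≤ β) (hC : 0 < C)
    (τ : Ω → ℝ) (hτ : IsStoppingTime ℱ (fun ω => (τ ω : WithTop ℝ))) (hτnn : ∀ ω, 0 ≤ τ ω)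
    (hτbdd : ∃ Tb : ℝ, ∀ ω, τ ω ≤ Tb)
    (ℓ : ℝ) (hℓ : 0 < ℓ) :
    P {ω | ℓ < sSup ((fun t => M t ω) '' Icc 0 (τ ω)) ∧
        Q (τ ω) ω ≤ β * sSup ((fun t => M t ω) '' Icc 0 (τ ω)) + C} ≤
      ENNReal.ofReal (Real.exp (-ℓ ^ 2 / (2 * (β * ℓ + C)))) := by
  obtain ⟨Tb, hTb⟩ := hτbdd
  have hMQ : IsQuadraticVariation ℱ P M Q := ⟨hM, hMcont, hQV, hQcont, hQmono, hQ0⟩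
  set θ := ℓ / (β * ℓ + C)
  set g := ℓ ^ 2 / (2 * (β * ℓ + C))
  have hθ : 0 < θ := by positivity
  obtain ⟨U, hU, hUτ, hUg, hUhit⟩ := exists_isStoppingTime_le_level
    (X := fun t ω => θ * M t ω - θ ^ 2 / 2 * Q t ω) (g := g)
    (fun t => ((hM.stronglyAdapted t).const_mul θ).sub (hMQ.stronglyAdapted_qv t |>.const_mul _))
    (fun ω => (continuous_const.mul (hMcont ω)).sub (continuous_const.mul (hQcont ω)))
    (fun ω => by simp only [hM0, hQ0, mul_zero, sub_zero]; positivity) hτ hτnn hTb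
  have hZ1 := hMQ.integral_stochasticExp_le_one hM0 hθ hU (fun ω => (hUτ ω).1)
    (fun ω => (hUτ ω).2.trans (hTb ω)) hUg (hMQ.integrable_qv (hML2 Tb))
  refine (measure_mono fun ω hω => ?_).trans <|
    (measure_exp_le_le_ofReal_exp_neg (fun ω => (Real.exp_pos _).le)
      (hMQ.integrable_stochasticExp_comp hU fun ω => hUg ω _ ⟨(hUτ ω).1, le_rfl⟩) hZ1 g).trans_eq
      (by rw [neg_div])
  obtain ⟨u, hu, hMu⟩ := (isCompact_Icc.image (hMcont ω)).sSup_mem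
    ((nonempty_Icc.mpr (hτnn ω)).image _)
  refine Real.exp_le_exp.mpr (hUhit ω ⟨u, hu, ?_⟩)
  have := bernstein_level_le hβ hC hℓ hω.1 ((hQmono ω hu.2).trans hω.2)
  simpa only [← hMu] using this
end

section
/- Let X : [0,T] → ℝ be Hölder continuous with X_0 = 0: |X_t - X_{t'}| ≤ λ |τ_t - τ_{t'}|^α for all t,t', where τ : [0,T] → [0,∞) is nondecreasing with τ_T ≤ ℓ and α ∈ (0,1). Then for any δ ∈ (0, T], ω¹(X;δ) ≤ 2λδ ℓ^α + λ T^{1-α} δ^α ℓ^α, where ω¹(X;δ) := sup_{δ'∈(0,δ]} ( ∫_0^{δ'} (|X_t| + |X_{T-t}|) dt + ∫_{δ'}^T |X_t - X_{t-δ'}| dt ). -/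
open MeasureTheory Set

/-!
For `0 < δ' ≤ δ`, the boundary integrals are at most `2δ'λℓ^α` because `X_0 = 0` forces
`|X_t| ≤ λℓ^α` on `[0,T]`. For the increment integral, Hölder continuity bounds it by
`λ ∫_{δ'}^T (τ_t - τ_{t-δ'})^α dt`; Jensen's inequality for the concave `x ↦ x^α` bounds this by
`λ (T - δ')^{1-α} (∫_{δ'}^T (τ_t - τ_{t-δ'}) dt)^α`, and the last integral telescopes to
`∫_{T-δ'}^T τ - ∫_0^{δ'} τ ≤ δ' (τ_T - τ_0) ≤ δ'ℓ` by monotonicity.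
-/

/-- The `L¹`-continuity modulus `ω¹(X;δ)` of `X : [0,T] → ℝ` regarded as an element of
`L¹(ℝ)` extended by zero outside `[0,T]`. -/
noncomputable def omega1 (T : ℝ) (z : ℝ → ℝ) (δ : ℝ) : ℝ :=
  ⨆ δ' : {x : ℝ // 0 < x ∧ x ≤ δ},
    ((∫ t in Ioc (0 : ℝ) δ'.1, (|z t| + |z (T - t)|)) +
      ∫ t in Ioc (δ'.1) T, |z t - z (t - δ'.1)|)

theorem Real.rpow_le_one_add {x p : ℝ} (hx : 0 ≤ x) (hp0 : 0 ≤ p) (hp1 : p ≤ 1) :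
    x ^ p ≤ 1 + x := by
  rcases le_total x 1 with h | h
  · linarith [Real.rpow_le_one hx h hp0]
  · linarith [Real.rpow_le_self_of_one_le h hp1]

section

variable {Ω : Type*} [MeasurableSpace Ω] {μ : Measure Ω} [IsFiniteMeasure μ] {f : Ω → ℝ} {p : ℝ}

theorem MeasureTheory.Integrable.rpow_const_of_nonneg (hp0 : 0 ≤ p) (hp1 : p ≤ 1)
    (hf0 : 0 ≤ᵐ[μ] f) (hf : Integrable f μ) : Integrable (fun x ↦ f x ^ p) μ := by
  refine ((integrable_const 1).add hf).mono'
    (hf.aemeasurable.pow_const p).aestronglyMeasurable ?_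
  filter_upwards [hf0] with x hx
  rw [Real.norm_of_nonneg (Real.rpow_nonneg hx p)]
  exact Real.rpow_le_one_add hx hp0 hp1

theorem MeasureTheory.integral_rpow_le_measureReal_rpow_mul (hp0 : 0 ≤ p) (hp1 : p ≤ 1)
    (hf0 : 0 ≤ᵐ[μ] f) (hf : Integrable f μ) :
    ∫ x, f x ^ p ∂μ ≤ μ.real univ ^ (1 - p) * (∫ x, f x ∂μ) ^ p := by
  rcases eq_zero_or_neZero μ with rfl | _
  · simp only [integral_zero_measure]; positivity
  have hm : 0 < μ.real univ := by
    simp [measureReal_def, ENNReal.toReal_pos_iff, measure_lt_top, NeZero.ne μ]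
  have hJensen := (Real.concaveOn_rpow hp0 hp1).le_map_average
    (Real.continuous_rpow_const hp0).continuousOn isClosed_Ici hf0 hf
    (hf.rpow_const_of_nonneg hp0 hp1 hf0)
  rw [average_eq, average_eq, smul_eq_mul, smul_eq_mul,
    Real.mul_rpow (by positivity) (integral_nonneg_of_ae hf0), Real.inv_rpow hm.le,
    inv_mul_le_iff₀ hm] at hJensen
  calc ∫ x, f x ^ p ∂μ ≤ μ.real univ * ((μ.real univ ^ p)⁻¹ * (∫ x, f x ∂μ) ^ p) := hJensen
    _ = μ.real univ ^ (1 - p) * (∫ x, f x ∂μ) ^ p := by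
      rw [Real.rpow_sub hm, Real.rpow_one, div_eq_mul_inv, mul_assoc]

end

section

variable {τ : ℝ → ℝ} {a b h : ℝ}

theorem MonotoneOn.intervalIntegrable_of_mem (hτ : MonotoneOn τ (Icc a b)) {c d : ℝ}
    (hc : c ∈ Icc a b) (hd : d ∈ Icc a b) : IntervalIntegrable τ volume c d :=
  (hτ.mono (uIcc_subset_Icc hc hd)).intervalIntegrable

theorem MonotoneOn.intervalIntegrable_comp_sub (hτ : MonotoneOn τ (Icc a b)) (hh : 0 ≤ h)
    (hab : a + h ≤ b) : IntervalIntegrable (fun t ↦ τ (t - h)) volume (a + h) b := by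
  simpa using (hτ.intervalIntegrable_of_mem (c := a) (d := b - h) ⟨le_rfl, by linarith⟩
    ⟨by linarith, by linarith⟩).comp_sub_right h

theorem MonotoneOn.integral_sub_comp_sub_le (hτ : MonotoneOn τ (Icc a b)) (hh : 0 ≤ h)
    (hab : a + h ≤ b) : ∫ t in Ioc (a + h) b, (τ t - τ (t - h)) ≤ h * (τ b - τ a) := by
  have ha : a ∈ Icc a b := ⟨le_rfl, by linarith⟩
  have hb : b ∈ Icc a b := ⟨by linarith, le_rfl⟩
  have hah : a + h ∈ Icc a b := ⟨by linarith, hab⟩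
  have hbh : b - h ∈ Icc a b := ⟨by linarith, by linarith⟩
  have hhigh : ∫ t in (b - h)..b, τ t ≤ h * τ b := by
    have := intervalIntegral.integral_mono_on (g := fun _ ↦ τ b) (by linarith)
      (hτ.intervalIntegrable_of_mem hbh hb) intervalIntegrable_const
      fun t ht ↦ hτ ⟨hbh.1.trans ht.1, ht.2⟩ hb ht.2
    simpa using this
  have hlow : h * τ a ≤ ∫ t in a..(a + h), τ t := by
    have := intervalIntegral.integral_mono_on (f := fun _ ↦ τ a) (by linarith)
      intervalIntegrable_const (hτ.intervalIntegrable_of_mem ha hah)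
      fun t ht ↦ hτ ha ⟨ht.1, ht.2.trans hah.2⟩ ht.1
    simpa using this
  have hshift : ∫ t in (a + h)..b, τ (t - h) = ∫ t in a..(b - h), τ t := by
    rw [intervalIntegral.integral_comp_sub_right τ h, add_sub_cancel_right]
  rw [← intervalIntegral.integral_of_le hab, intervalIntegral.integral_sub
    (hτ.intervalIntegrable_of_mem hah hb) (hτ.intervalIntegrable_comp_sub hh hab), hshift,
    intervalIntegral.integral_interval_sub_interval_comm (hτ.intervalIntegrable_of_mem hah hb)
      (hτ.intervalIntegrable_of_mem ha hbh) (hτ.intervalIntegrable_of_mem hah ha),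
    intervalIntegral.integral_symm a, intervalIntegral.integral_symm (b - h)]
  linarith

end

theorem integral_abs_add_abs_reflect_le {z : ℝ → ℝ} {T h M : ℝ}
    (hz : ∀ t ∈ Icc 0 T, |z t| ≤ M) (hh : 0 ≤ h) (hhT : h ≤ T) :
    ∫ t in Ioc 0 h, (|z t| + |z (T - t)|) ≤ 2 * M * h := by
  have hbound : ∀ t ∈ Ioc 0 h, ‖|z t| + |z (T - t)|‖ ≤ 2 * M := fun t ht ↦ by
    rw [Real.norm_of_nonneg (by positivity)]
    linarith [hz t ⟨ht.1.le, ht.2.trans hhT⟩, hz (T - t) ⟨by linarith [ht.2], by linarith [ht.1]⟩]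
  simpa [Real.volume_real_Ioc_of_le hh] using
    (le_abs_self _).trans
      (norm_setIntegral_le_of_norm_le_const (measure_Ioc_lt_top (μ := volume)) hbound)

theorem integral_abs_sub_comp_sub_le_of_holder {X τ : ℝ → ℝ} {a b h lam α : ℝ}
    (hτ : MonotoneOn τ (Icc a b)) (hlam : 0 ≤ lam) (hα0 : 0 ≤ α) (hα1 : α ≤ 1)
    (hHolder : ∀ t ∈ Icc a b, ∀ t' ∈ Icc a b, |X t - X t'| ≤ lam * |τ t - τ t'| ^ α)
    (hh : 0 ≤ h) (hab : a + h ≤ b) :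
    ∫ t in Ioc (a + h) b, |X t - X (t - h)| ≤
      lam * (b - a - h) ^ (1 - α) * (h * (τ b - τ a)) ^ α := by
  have hmem : ∀ t ∈ Ioc (a + h) b, t ∈ Icc a b ∧ t - h ∈ Icc a b := fun t ht ↦
    ⟨⟨by linarith [ht.1], ht.2⟩, ⟨by linarith [ht.1], by linarith [ht.2]⟩⟩
  have hinc0 : ∀ᵐ t ∂volume.restrict (Ioc (a + h) b), 0 ≤ τ t - τ (t - h) := by
    filter_upwards [ae_restrict_mem measurableSet_Ioc] with t ht
    exact sub_nonneg.2 (hτ (hmem t ht).2 (hmem t ht).1 (by linarith))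
  have hinc : IntegrableOn (fun t ↦ τ t - τ (t - h)) (Ioc (a + h) b) :=
    ((hτ.intervalIntegrable_of_mem ⟨by linarith, hab⟩ ⟨by linarith, le_rfl⟩).sub
      (hτ.intervalIntegrable_comp_sub hh hab)).1
  have hincα := hinc.rpow_const_of_nonneg hα0 hα1 hinc0
  calc ∫ t in Ioc (a + h) b, |X t - X (t - h)|
      ≤ ∫ t in Ioc (a + h) b, lam * (τ t - τ (t - h)) ^ α := by
        -- `X` need not be measurable: only the majorant has to be integrable.
        refine integral_mono_of_nonneg (.of_forall fun _ ↦ abs_nonneg _) (hincα.const_mul lam) ?_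
        filter_upwards [ae_restrict_mem measurableSet_Ioc, hinc0] with t ht ht0
        simpa [abs_of_nonneg ht0] using hHolder t (hmem t ht).1 (t - h) (hmem t ht).2
    _ ≤ lam * ((b - a - h) ^ (1 - α) * (∫ t in Ioc (a + h) b, (τ t - τ (t - h))) ^ α) := by
        rw [integral_const_mul]
        gcongr
        simpa [Real.volume_real_Ioc_of_le hab, sub_sub] using
          integral_rpow_le_measureReal_rpow_mul hα0 hα1 hinc0 hinc
    _ ≤ lam * (b - a - h) ^ (1 - α) * (h * (τ b - τ a)) ^ α := by
        rw [mul_assoc]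
        gcongr
        · exact Real.rpow_nonneg (by linarith) _
        · exact integral_nonneg_of_ae hinc0
        · exact hτ.integral_sub_comp_sub_le hh hab

theorem stmt_9_general (T ℓ lam α : ℝ) (X τ : ℝ → ℝ)
    (hα : α ∈ Set.Ioo (0 : ℝ) 1) (hlam : 0 ≤ lam)
    (hX0 : X 0 = 0)
    (hτmono : MonotoneOn τ (Icc 0 T)) (hτnn : ∀ t ∈ Icc (0 : ℝ) T, 0 ≤ τ t)
    (hτT : τ T ≤ ℓ)
    (hHolder : ∀ t ∈ Icc (0 : ℝ) T, ∀ t' ∈ Icc (0 : ℝ) T,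
      |X t - X t'| ≤ lam * |τ t - τ t'| ^ α)
    (δ : ℝ) (hδ : δ ∈ Set.Ioc (0 : ℝ) T) :
    omega1 T X δ ≤ 2 * lam * δ * ℓ ^ α + lam * T ^ (1 - α) * δ ^ α * ℓ ^ α := by
  obtain ⟨hα0, hα1⟩ := hα
  obtain ⟨hδ0, hδT⟩ := hδ
  have h0 : (0 : ℝ) ∈ Icc 0 T := ⟨le_rfl, hδ0.le.trans hδT⟩
  have hTmem : T ∈ Icc 0 T := ⟨h0.2, le_rfl⟩
  have hrange : τ T - τ 0 ≤ ℓ := by linarith [hτnn 0 h0]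
  have hℓ : 0 ≤ ℓ := by linarith [hτnn T hTmem]
  have hXbound : ∀ t ∈ Icc 0 T, |X t| ≤ lam * ℓ ^ α := fun t ht ↦ by
    have hτt : 0 ≤ τ t - τ 0 := sub_nonneg.2 (hτmono h0 ht ht.1)
    have := hHolder t ht 0 h0
    rw [hX0, sub_zero, abs_of_nonneg hτt] at this
    exact this.trans (by gcongr; linarith [hτmono ht hTmem ht.2])
  have : Nonempty {x : ℝ // 0 < x ∧ x ≤ δ} := ⟨⟨δ, hδ0, le_rfl⟩⟩
  refine ciSup_le fun ⟨δ', hδ'0, hδ'δ⟩ ↦ add_le_add ?_ ?_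
  · calc _ ≤ 2 * (lam * ℓ ^ α) * δ' :=
          integral_abs_add_abs_reflect_le hXbound hδ'0.le (hδ'δ.trans hδT)
      _ = 2 * lam * δ' * ℓ ^ α := by ring
      _ ≤ 2 * lam * δ * ℓ ^ α := by gcongr
  · have hinc := integral_abs_sub_comp_sub_le_of_holder hτmono hlam hα0.le hα1.le hHolder
      hδ'0.le (by linarith : 0 + δ' ≤ T)
    rw [zero_add, sub_zero] at hinc
    calc _ ≤ lam * T ^ (1 - α) * (δ * ℓ) ^ α := by
          have hτ0T : 0 ≤ τ T - τ 0 := sub_nonneg.2 (hτmono h0 hTmem h0.2)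
          refine hinc.trans ?_
          gcongr
          · exact mul_nonneg hlam (Real.rpow_nonneg h0.2 _)
          · linarith
          · linarith
      _ = lam * T ^ (1 - α) * δ ^ α * ℓ ^ α := by rw [Real.mul_rpow hδ0.le hℓ]; ring

/-- if `X : [0,T] → ℝ`, `X 0 = 0`, is Hölder continuous with respect to a
nondecreasing time change `τ` with `τ_T ≤ ℓ`, namely `|X_t - X_{t'}| ≤ λ |τ_t - τ_{t'}|^α`,
then for every `δ ∈ (0,T]` one has `ω¹(X;δ) ≤ 2λδℓ^α + λT^{1-α}δ^α ℓ^α`. -/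
theorem stmt_9 (T ℓ lam α : ℝ) (X τ : ℝ → ℝ)
    (hT : 0 < T) (hα : α ∈ Set.Ioo (0 : ℝ) 1) (hlam : 0 ≤ lam)
    (hX0 : X 0 = 0)
    (hτmono : MonotoneOn τ (Icc 0 T)) (hτnn : ∀ t ∈ Icc (0 : ℝ) T, 0 ≤ τ t)
    (hτT : τ T ≤ ℓ)
    (hHolder : ∀ t ∈ Icc (0 : ℝ) T, ∀ t' ∈ Icc (0 : ℝ) T,
      |X t - X t'| ≤ lam * |τ t - τ t'| ^ α)
    (δ : ℝ) (hδ : δ ∈ Set.Ioc (0 : ℝ) T) :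
    omega1 T X δ ≤ 2 * lam * δ * ℓ ^ α + lam * T ^ (1 - α) * δ ^ α * ℓ ^ α :=
  stmt_9_general T ℓ lam α X τ hα hlam hX0 hτmono hτnn hτT hHolder δ hδ
end

section
/- Let u ∈ H²(𝕋^d) with W'(u) ∈ L²(𝕋^d) and let X ∈ C^∞(𝕋^d; ℝ^d) be a smooth vector field, and let n = ∇u/|∇u| where ∇u ≠ 0. Then ∫ ∇u·X (εΔu - (1/ε)W'(u)) dx = δV(X) - ∫ n·DX n dξ, where δV(X) = ∫ Tr(DXᵀ P_{n^⊥}) dμ with dμ = ((ε/2)|∇u|² + (1/ε)W(u)) dx and dξ = ((ε/2)|∇u|² - (1/ε)W(u)) dx. -/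
open MeasureTheory Set

/-- Partial derivative `∂f/∂x_k` (junk value if `f` is not differentiable at `x`). -/
noncomputable def pderiv' (d : ℕ) (f : (Fin d → ℝ) → ℝ) (k : Fin d) (x : Fin d → ℝ) : ℝ :=
  fderiv ℝ f x (Pi.single k 1)

/-- Divergence of a vector field `X` on `ℝ^d`. -/
noncomputable def divg (d : ℕ) (X : (Fin d → ℝ) → Fin d → ℝ) (x : Fin d → ℝ) : ℝ :=
  ∑ k, pderiv' d (fun y => X y k) k x

/-- The unit cube `Q = [0,1)^d`, a fundamental domain of the torus `𝕋^d`. -/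
def unitCube (d : ℕ) : Set (Fin d → ℝ) := Set.pi Set.univ fun _ => Set.Ico (0 : ℝ) 1

/-- The unit vector `n = ∇u/|∇u|` where `∇u ≠ 0`, and an arbitrary fixed unit vector `e₀`
where `∇u = 0`. -/
noncomputable def nvec (d : ℕ) (u : (Fin d → ℝ) → ℝ) (e₀ : Fin d → ℝ) (x : Fin d → ℝ) :
    Fin d → ℝ :=
  if (∑ k, pderiv' d u k x ^ 2) = 0 then e₀
  else fun k => pderiv' d u k x / Real.sqrt (∑ j, pderiv' d u j x ^ 2)

/-- The quadratic form `n · DX n`. -/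
noncomputable def nDXn (d : ℕ) (u : (Fin d → ℝ) → ℝ) (e₀ : Fin d → ℝ)
    (X : (Fin d → ℝ) → Fin d → ℝ) (x : Fin d → ℝ) : ℝ :=
  ∑ j, ∑ k, nvec d u e₀ x j * pderiv' d (fun y => X y j) k x * nvec d u e₀ x k

/-! ### Auxiliary lemmas -/

lemma update_eq_add_single {d : ℕ} (x : Fin d → ℝ) (k : Fin d) :
    Function.update x k (x k + 1) = x + Pi.single k 1 := by
  funext j
  rcases eq_or_ne j k with rfl | h
  · simp
  · simp [Function.update_of_ne h, Pi.single_eq_of_ne h]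

lemma periodic_fderiv {d : ℕ} {f : (Fin d → ℝ) → ℝ} (hf : Differentiable ℝ f)
    (hper : ∀ x k, f (Function.update x k (x k + 1)) = f x) (x : Fin d → ℝ) (k : Fin d) :
    fderiv ℝ f (Function.update x k (x k + 1)) = fderiv ℝ f x := by
  have hfun : (f ∘ fun y => y + Pi.single k 1) = f := by
    funext y
    simp only [Function.comp_apply]
    rw [← update_eq_add_single]
    exact hper y k
  have h1 : HasFDerivAt (fun y : Fin d → ℝ => y + Pi.single k 1)
      (ContinuousLinearMap.id ℝ (Fin d → ℝ)) x := (hasFDerivAt_id x).add_const _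
  have h2 := ((hf (x + Pi.single k 1)).hasFDerivAt).comp x h1
  rw [hfun] at h2
  rw [update_eq_add_single]
  rw [(hf x).hasFDerivAt.unique h2]
  simp

lemma integrableOn_cube {d : ℕ} {f : (Fin d → ℝ) → ℝ} (hf : Continuous f) :
    IntegrableOn f (unitCube d) := by
  have h1 : IntegrableOn f (Set.Icc (0 : Fin d → ℝ) 1) :=
    hf.continuousOn.integrableOn_compact isCompact_Icc
  apply h1.mono_set
  rw [unitCube, ← Set.pi_univ_Icc]
  exact Set.pi_mono fun i _ => Set.Ico_subset_Icc_self

lemma cube_ae {d : ℕ} : unitCube d =ᵐ[volume] Set.Icc (0 : Fin d → ℝ) 1 := by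
  rw [unitCube, show (volume : Measure (Fin d → ℝ)) = Measure.pi fun _ => volume from volume_pi]
  exact MeasureTheory.Measure.univ_pi_Ico_ae_eq_Icc

/-- Integral of a divergence of a periodic `C¹` vector field over the unit cube vanishes. -/
lemma divfree {d : ℕ} (F : (Fin d → ℝ) → Fin d → ℝ)
    (hF : ∀ i, ContDiff ℝ 1 (fun x => F x i))
    (hper : ∀ x k i, F (Function.update x k (x k + 1)) i = F x i) :
    ∫ x in unitCube d, (∑ i, pderiv' d (fun y => F y i) i x) = 0 := by
  cases d with
  | zero => simp
  | succ n =>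
    rw [setIntegral_congr_set cube_ae]
    have hcont : ∀ i : Fin (n+1), Continuous fun x => fderiv ℝ (fun y => F y i) x (Pi.single i 1) :=
      fun i => (((hF i).fderiv_right (m := 0) (by norm_num)).clm_apply contDiff_const).continuous
    have key := MeasureTheory.integral_divergence_of_hasFDerivAt_off_countable'
      (a := (0 : Fin (n+1) → ℝ)) (b := (1 : Fin (n+1) → ℝ))
      zero_le_one (fun i x => F x i)
      (fun i x => fderiv ℝ (fun y => F y i) x) ∅ Set.countable_empty
      (fun i => ((hF i).continuous).continuousOn)
      (fun x _ i => (((hF i).differentiable one_ne_zero) x).hasFDerivAt)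
      ((continuous_finset_sum _ fun i _ => hcont i).continuousOn.integrableOn_compact isCompact_Icc)
    simp only [pderiv']
    rw [key]
    apply Finset.sum_eq_zero
    intro i _
    rw [sub_eq_zero]
    apply setIntegral_congr_fun (by exact measurableSet_Icc)
    intro x _
    have h1 : Fin.insertNth (α := fun _ : Fin (n+1) => ℝ) i ((1 : Fin (n+1) → ℝ) i) x
        = Function.update (Fin.insertNth (α := fun _ : Fin (n+1) => ℝ) i ((0 : Fin (n+1) → ℝ) i) x) i
          ((Fin.insertNth (α := fun _ : Fin (n+1) => ℝ) i ((0 : Fin (n+1) → ℝ) i) x) i + 1) := by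
      rw [Fin.insertNth_apply_same, Fin.update_insertNth]
      norm_num
    simp only [h1, hper]

lemma algebra_finale {ι : Type*} [Fintype ι] (ε M w' : ℝ) (p Xv : ι → ℝ) (b c : ι → ι → ℝ)
    (hb : ∀ i j, b i j = b j i) :
    ∑ i, (ε * (∑ j, (b i j * Xv j + p j * c j i)) * p i + ε * (∑ j, p j * Xv j) * b i i
      - c i i * M - Xv i * (ε * (∑ j, p j * b i j) + ε⁻¹ * (w' * p i)))
    = (∑ j, p j * Xv j) * (ε * (∑ k, b k k) - ε⁻¹ * w')
      - ((∑ k, c k k) * M - ε * ∑ j, ∑ k, p j * c j k * p k) := by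
  have h2 : ∀ i, ε * (∑ j, (b i j * Xv j + p j * c j i)) * p i
      = ε * (∑ j, b i j * Xv j * p i) + ε * (∑ j, p j * c j i * p i) := by
    intro i
    rw [Finset.sum_add_distrib, mul_add, add_mul, mul_assoc, mul_assoc, Finset.sum_mul,
      Finset.sum_mul]
  simp only [h2]
  simp only [Finset.sum_add_distrib, Finset.sum_sub_distrib, mul_add, mul_sub, sub_mul, add_mul,
    Finset.sum_mul, Finset.mul_sum]
  ring_nf
  have e1 : ∑ x : ι, ∑ y : ι, ε * b x y * Xv y * p x = ∑ x : ι, ∑ y : ι, Xv x * ε * p y * b x y := by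
    rw [Finset.sum_comm]
    exact Finset.sum_congr rfl fun x _ => Finset.sum_congr rfl fun y _ => by rw [hb y x]; ring
  have e2 : ∑ x : ι, ∑ y : ι, ε * p y * c y x * p x = ∑ x : ι, ∑ y : ι, ε * p x * c x y * p y :=
    Finset.sum_comm
  have e3 : ∑ x : ι, ∑ y : ι, ε * p y * Xv y * b x x = ∑ x : ι, ∑ y : ι, p y * Xv y * ε * b x x :=
    Finset.sum_congr rfl fun x _ => Finset.sum_congr rfl fun y _ => by ring
  have e4 : ∑ x : ι, Xv x * ε⁻¹ * w' * p x = ∑ x : ι, p x * Xv x * ε⁻¹ * w' :=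
    Finset.sum_congr rfl fun x _ => by ring
  rw [e1, e2, e3, e4]
  have f1 : ∑ x : ι, ∑ y : ι, ε * Xv x * p y * b x y = ∑ x : ι, ∑ y : ι, Xv x * ε * p y * b x y :=
    Finset.sum_congr rfl fun x _ => Finset.sum_congr rfl fun y _ => by ring
  have f2 : ∑ x : ι, ε⁻¹ * w' * p x * Xv x = ∑ x : ι, p x * Xv x * ε⁻¹ * w' :=
    Finset.sum_congr rfl fun x _ => by ring
  have f3 : ∑ x : ι, M * c x x = ∑ x : ι, c x x * M :=
    Finset.sum_congr rfl fun x _ => by ring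
  rw [f1, f2, f3]
  abel

lemma divergence_pointwise (d : ℕ) (ε : ℝ) (W : ℝ → ℝ) (hW : ContDiff ℝ 2 W)
    (u : (Fin d → ℝ) → ℝ) (hu : ContDiff ℝ 2 u)
    (X : (Fin d → ℝ) → Fin d → ℝ) (hX : ContDiff ℝ (⊤ : ℕ∞) fun x => X x) (x : Fin d → ℝ) :
    ∑ i, pderiv' d (fun y => ε * (∑ j, pderiv' d u j y * X y j) * pderiv' d u i y
        - X y i * (ε / 2 * (∑ j, pderiv' d u j y ^ 2) + ε⁻¹ * W (u y))) i x
    = (∑ k, pderiv' d u k x * X x k) *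
        (ε * (∑ k, pderiv' d (fun y => pderiv' d u k y) k x) - ε⁻¹ * deriv W (u x))
      - (divg d X x * (ε / 2 * (∑ k, pderiv' d u k x ^ 2) + ε⁻¹ * W (u x))
        - ε * ∑ j, ∑ k, pderiv' d u j x * pderiv' d (fun y => X y j) k x * pderiv' d u k x) := by
  have hud : Differentiable ℝ u := hu.differentiable two_ne_zero
  have hfd : Differentiable ℝ (fderiv ℝ u) :=
    (hu.fderiv_right (m := 1) (by norm_num)).differentiable one_ne_zero
  have hB : HasFDerivAt (fderiv ℝ u) (fderiv ℝ (fderiv ℝ u) x) x := (hfd x).hasFDerivAt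
  set B := fderiv ℝ (fderiv ℝ u) x with hBdef
  have hbsymm : ∀ v w, B v w = B w v :=
    second_derivative_symmetric (fun y => (hud y).hasFDerivAt) hB
  have hp : ∀ k : Fin d, HasFDerivAt (fun y => fderiv ℝ u y (Pi.single k 1))
      ((fderiv ℝ u x).comp (0 : (Fin d → ℝ) →L[ℝ] (Fin d → ℝ)) + B.flip (Pi.single k 1)) x :=
    fun k => hB.clm_apply (hasFDerivAt_const _ _)
  have hXc : ∀ j, ContDiff ℝ (⊤ : ℕ∞) fun y => X y j := fun j => contDiff_pi.mp hX j
  have hXd : ∀ j, HasFDerivAt (fun y => X y j) (fderiv ℝ (fun y => X y j) x) x :=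
    fun j => (((hXc j).differentiable (by simp)) x).hasFDerivAt
  have hWd : HasDerivAt W (deriv W (u x)) (u x) := ((hW.differentiable two_ne_zero) (u x)).hasDerivAt
  have hWu : HasFDerivAt (fun y => W (u y)) (deriv W (u x) • fderiv ℝ u x) x :=
    hWd.comp_hasFDerivAt x (hud x).hasFDerivAt
  have hS := HasFDerivAt.fun_sum (u := Finset.univ) fun (j : Fin d) _ => (hp j).mul (hXd j)
  have hsq := HasFDerivAt.fun_sum (u := Finset.univ) fun (j : Fin d) _ => (hp j).mul (hp j)
  have hlap : ∀ k : Fin d, fderiv ℝ (fun y => fderiv ℝ u y (Pi.single k 1)) x (Pi.single k 1)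
      = B (Pi.single k 1) (Pi.single k 1) := by
    intro k
    rw [(hp k).fderiv]
    simp
  have hval : ∀ i : Fin d,
      fderiv ℝ (fun y => ε * (∑ j, fderiv ℝ u y (Pi.single j 1) * X y j) * fderiv ℝ u y (Pi.single i 1)
        - X y i * (ε / 2 * (∑ j, fderiv ℝ u y (Pi.single j 1) * fderiv ℝ u y (Pi.single j 1)) + ε⁻¹ * W (u y))) x
        (Pi.single i 1)
      = ε * (∑ j, (B (Pi.single i 1) (Pi.single j 1) * X x j
            + fderiv ℝ u x (Pi.single j 1) * fderiv ℝ (fun y => X y j) x (Pi.single i 1))) *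
          fderiv ℝ u x (Pi.single i 1)
        + ε * (∑ j, fderiv ℝ u x (Pi.single j 1) * X x j) * B (Pi.single i 1) (Pi.single i 1)
        - fderiv ℝ (fun y => X y i) x (Pi.single i 1) *
            (ε / 2 * (∑ j, fderiv ℝ u x (Pi.single j 1) * fderiv ℝ u x (Pi.single j 1)) + ε⁻¹ * W (u x))
        - X x i * (ε * (∑ j, fderiv ℝ u x (Pi.single j 1) * B (Pi.single i 1) (Pi.single j 1))
            + ε⁻¹ * (deriv W (u x) * fderiv ℝ u x (Pi.single i 1))) := by
    intro i
    have h := ((hS.const_mul ε).mul (hp i)).sub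
      ((hXd i).mul ((hsq.const_mul (ε / 2)).add (hWu.const_mul ε⁻¹)))
    simp only [Pi.mul_def, Pi.add_def, Pi.sub_def] at h
    beta_reduce at h
    rw [h.fderiv]
    simp only [ContinuousLinearMap.add_apply, ContinuousLinearMap.sub_apply,
      ContinuousLinearMap.smul_apply, ContinuousLinearMap.coe_sum', Finset.sum_apply,
      ContinuousLinearMap.comp_apply, ContinuousLinearMap.flip_apply,
      ContinuousLinearMap.zero_apply, map_zero, smul_eq_mul, mul_zero, zero_add, add_zero, zero_mul]
    have hA : ∑ j : Fin d, ((fderiv ℝ u x) (Pi.single j 1) * (fderiv ℝ (fun y => X y j) x) (Pi.single i 1)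
        + X x j * (B (Pi.single i 1)) (Pi.single j 1))
        = ∑ j : Fin d, ((B (Pi.single i 1)) (Pi.single j 1) * X x j
        + (fderiv ℝ u x) (Pi.single j 1) * (fderiv ℝ (fun y => X y j) x) (Pi.single i 1)) :=
      Finset.sum_congr rfl fun j _ => by ring
    rw [hA]
    simp only [Finset.sum_add_distrib]
    ring
  simp only [pderiv', pow_two, divg]
  rw [Finset.sum_congr rfl fun i _ => hval i]
  simp only [hlap]
  exact algebra_finale ε
    (ε / 2 * (∑ k, fderiv ℝ u x (Pi.single k 1) * fderiv ℝ u x (Pi.single k 1)) + ε⁻¹ * W (u x))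
    (deriv W (u x)) (fun j => fderiv ℝ u x (Pi.single j 1)) (fun j => X x j)
    (fun i j => B (Pi.single i 1) (Pi.single j 1))
    (fun j i => fderiv ℝ (fun y => X y j) x (Pi.single i 1))
    (fun i j => hbsymm _ _)

lemma nDXn_mul (d : ℕ) (u : (Fin d → ℝ) → ℝ) (e₀ : Fin d → ℝ)
    (X : (Fin d → ℝ) → Fin d → ℝ) (x : Fin d → ℝ) :
    nDXn d u e₀ X x * (∑ j, pderiv' d u j x ^ 2)
      = ∑ j, ∑ k, pderiv' d u j x * pderiv' d (fun y => X y j) k x * pderiv' d u k x := by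
  by_cases h : (∑ k, pderiv' d u k x ^ 2) = 0
  · have hz : ∀ j, pderiv' d u j x = 0 := by
      intro j
      have := (Finset.sum_eq_zero_iff_of_nonneg (fun k _ => sq_nonneg (pderiv' d u k x))).mp h j
        (Finset.mem_univ j)
      exact pow_eq_zero_iff two_ne_zero |>.mp this
    rw [h, mul_zero]
    symm
    refine Finset.sum_eq_zero fun j _ => Finset.sum_eq_zero fun k _ => by rw [hz j]; ring
  · have hpos : 0 < ∑ k, pderiv' d u k x ^ 2 :=
      (Finset.sum_nonneg fun k _ => sq_nonneg _).lt_of_ne (Ne.symm h)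
    have hsne : Real.sqrt (∑ j, pderiv' d u j x ^ 2) ≠ 0 := (Real.sqrt_pos.mpr hpos).ne'
    have hs : Real.sqrt (∑ j, pderiv' d u j x ^ 2) * Real.sqrt (∑ j, pderiv' d u j x ^ 2)
        = ∑ j, pderiv' d u j x ^ 2 := Real.mul_self_sqrt hpos.le
    simp only [nDXn, nvec, if_neg h]
    rw [Finset.sum_mul]
    refine Finset.sum_congr rfl fun j _ => ?_
    rw [Finset.sum_mul]
    refine Finset.sum_congr rfl fun k _ => ?_
    field_simp
    rw [Real.sq_sqrt hpos.le]
    ring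

lemma abs_nvec_le {d : ℕ} {u : (Fin d → ℝ) → ℝ} {e₀ : Fin d → ℝ}
    (he₀ : ∑ k, e₀ k ^ 2 = 1) (x : Fin d → ℝ) (j : Fin d) : |nvec d u e₀ x j| ≤ 1 := by
  rw [nvec]
  split_ifs with h
  · have h1 : e₀ j ^ 2 ≤ 1 := by
      calc e₀ j ^ 2 ≤ ∑ k, e₀ k ^ 2 :=
        Finset.single_le_sum (fun k _ => sq_nonneg (e₀ k)) (Finset.mem_univ j)
      _ = 1 := he₀
    nlinarith [sq_abs (e₀ j), abs_nonneg (e₀ j)]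
  · have hpos : 0 < ∑ k, pderiv' d u k x ^ 2 :=
      (Finset.sum_nonneg fun k _ => sq_nonneg _).lt_of_ne (Ne.symm h)
    have h1 : pderiv' d u j x ^ 2 ≤ ∑ k, pderiv' d u k x ^ 2 :=
      Finset.single_le_sum (fun k _ => sq_nonneg (pderiv' d u k x)) (Finset.mem_univ j)
    rw [abs_div, abs_of_nonneg (Real.sqrt_nonneg _), div_le_one (Real.sqrt_pos.mpr hpos)]
    rw [← Real.sqrt_sq_eq_abs]
    exact Real.sqrt_le_sqrt h1

lemma abs_nDXn_le {d : ℕ} {u : (Fin d → ℝ) → ℝ} {e₀ : Fin d → ℝ}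
    {X : (Fin d → ℝ) → Fin d → ℝ} (he₀ : ∑ k, e₀ k ^ 2 = 1) (x : Fin d → ℝ) :
    |nDXn d u e₀ X x| ≤ ∑ j, ∑ k, |pderiv' d (fun y => X y j) k x| := by
  rw [nDXn]
  calc |∑ j, ∑ k, nvec d u e₀ x j * pderiv' d (fun y => X y j) k x * nvec d u e₀ x k|
      ≤ ∑ j, |∑ k, nvec d u e₀ x j * pderiv' d (fun y => X y j) k x * nvec d u e₀ x k| :=
        Finset.abs_sum_le_sum_abs _ _
    _ ≤ ∑ j, ∑ k, |nvec d u e₀ x j * pderiv' d (fun y => X y j) k x * nvec d u e₀ x k| :=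
        Finset.sum_le_sum fun j _ => Finset.abs_sum_le_sum_abs _ _
    _ ≤ ∑ j, ∑ k, |pderiv' d (fun y => X y j) k x| := by
        refine Finset.sum_le_sum fun j _ => Finset.sum_le_sum fun k _ => ?_
        rw [abs_mul, abs_mul]
        calc |nvec d u e₀ x j| * |pderiv' d (fun y => X y j) k x| * |nvec d u e₀ x k|
            ≤ 1 * |pderiv' d (fun y => X y j) k x| * 1 := by
              apply mul_le_mul (mul_le_mul (abs_nvec_le he₀ x j) le_rfl (abs_nonneg _) zero_le_one)
                (abs_nvec_le he₀ x k) (abs_nonneg _) (by positivity)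
          _ = |pderiv' d (fun y => X y j) k x| := by ring

lemma measurable_nDXn {d : ℕ} {u : (Fin d → ℝ) → ℝ} {e₀ : Fin d → ℝ}
    {X : (Fin d → ℝ) → Fin d → ℝ} (hu : ContDiff ℝ 2 u) (hX : ContDiff ℝ (⊤ : ℕ∞) fun x => X x) :
    Measurable (nDXn d u e₀ X) := by
  have hPc : ∀ k, Continuous fun x => pderiv' d u k x :=
    fun k => ((hu.fderiv_right (m := 1) (by norm_num)).clm_apply contDiff_const).continuous
  have hS : Continuous fun x => ∑ k, pderiv' d u k x ^ 2 :=
    continuous_finset_sum _ fun k _ => (hPc k).pow 2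
  have hCc : ∀ j k, Continuous fun x => pderiv' d (fun y => X y j) k x :=
    fun j k => (((contDiff_pi.mp hX j).fderiv_right (m := 0) (by simp)).clm_apply
      contDiff_const).continuous
  have hnv : ∀ j, Measurable fun x => nvec d u e₀ x j := by
    intro j
    simp only [nvec]
    simp only [apply_ite (fun f : Fin d → ℝ => f j)]
    exact Measurable.ite (hS.measurable (measurableSet_singleton 0)) measurable_const
      ((hPc j).measurable.div ((Real.continuous_sqrt.comp hS).measurable))
  unfold nDXn
  refine Finset.measurable_sum _ fun j _ => Finset.measurable_sum _ fun k _ => ?_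
  exact ((hnv j).mul (hCc j k).measurable).mul (hnv k)

/-- for `u ∈ H²(𝕋^d)` (here a 1-periodic `C²` function) and a smooth
periodic vector field `X`,
`∫ (∇u·X)(εΔu - (1/ε)W'(u)) dx = δV(X) - ∫ n·DXn dξ`, where
`δV(X) = ∫ (div X - n·DXn) dμ`, `dμ = ((ε/2)|∇u|² + (1/ε)W(u)) dx` is the diffuse energy
measure and `dξ = ((ε/2)|∇u|² - (1/ε)W(u)) dx` the discrepancy measure. -/
theorem stmt_11 (d : ℕ) (ε : ℝ) (hε : 0 < ε)
    (W : ℝ → ℝ) (hW : ContDiff ℝ 2 W) (hWnn : ∀ s, 0 ≤ W s)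
    (u : (Fin d → ℝ) → ℝ) (hu : ContDiff ℝ 2 u)
    (huper : ∀ (x : Fin d → ℝ) (k : Fin d), u (Function.update x k (x k + 1)) = u x)
    (X : (Fin d → ℝ) → Fin d → ℝ) (hX : ContDiff ℝ (⊤ : ℕ∞) fun x => X x)
    (hXper : ∀ (x : Fin d → ℝ) (k j : Fin d),
      X (Function.update x k (x k + 1)) j = X x j)
    (e₀ : Fin d → ℝ) (he₀ : ∑ k, e₀ k ^ 2 = 1) :
    (∫ x in unitCube d,
        (∑ k, pderiv' d u k x * X x k) *
          (ε * (∑ k, pderiv' d (fun y => pderiv' d u k y) k x) - ε⁻¹ * deriv W (u x))) =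
      (∫ x in unitCube d,
        (divg d X x - nDXn d u e₀ X x) *
          (ε / 2 * (∑ k, pderiv' d u k x ^ 2) + ε⁻¹ * W (u x))) -
      ∫ x in unitCube d,
        nDXn d u e₀ X x * (ε / 2 * (∑ k, pderiv' d u k x ^ 2) - ε⁻¹ * W (u x)) := by
  classical
  have hud : Differentiable ℝ u := hu.differentiable two_ne_zero
  have hcube : MeasurableSet (unitCube d) := MeasurableSet.univ_pi fun i => measurableSet_Ico
  have hP1 : ∀ k, ContDiff ℝ 1 fun x => pderiv' d u k x :=
    fun k => (hu.fderiv_right (m := 1) (by norm_num)).clm_apply contDiff_const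
  have hPc : ∀ k, Continuous fun x => pderiv' d u k x := fun k => (hP1 k).continuous
  have hX1 : ∀ j, ContDiff ℝ 1 fun x => X x j := fun j => (contDiff_pi.mp hX j).of_le (by simp)
  have hCc : ∀ j k, Continuous fun x => pderiv' d (fun y => X y j) k x :=
    fun j k => (((contDiff_pi.mp hX j).fderiv_right (m := 0) (by simp)).clm_apply
      contDiff_const).continuous
  have hLapc : ∀ k, Continuous fun x => pderiv' d (fun y => pderiv' d u k y) k x :=
    fun k => (((hP1 k).fderiv_right (m := 0) (by norm_num)).clm_apply contDiff_const).continuous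
  have hWuc : Continuous fun x => W (u x) := hW.continuous.comp hu.continuous
  have hW'c : Continuous fun x => deriv W (u x) := (hW.continuous_deriv one_le_two).comp hu.continuous
  have hsqc : Continuous fun x => ∑ k, pderiv' d u k x ^ 2 :=
    continuous_finset_sum _ fun k _ => (hPc k).pow 2
  have hMc : Continuous fun x => ε / 2 * (∑ k, pderiv' d u k x ^ 2) + ε⁻¹ * W (u x) :=
    (continuous_const.mul hsqc).add (continuous_const.mul hWuc)
  have hξc : Continuous fun x => ε / 2 * (∑ k, pderiv' d u k x ^ 2) - ε⁻¹ * W (u x) :=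
    (continuous_const.mul hsqc).sub (continuous_const.mul hWuc)
  have hdivgc : Continuous (divg d X) := by
    unfold divg
    exact continuous_finset_sum _ fun k _ => hCc k k
  have hTc : Continuous fun x =>
      ∑ j, ∑ k, pderiv' d u j x * pderiv' d (fun y => X y j) k x * pderiv' d u k x :=
    continuous_finset_sum _ fun j _ => continuous_finset_sum _ fun k _ =>
      ((hPc j).mul (hCc j k)).mul (hPc k)
  have hAc : Continuous fun x => (∑ k, pderiv' d u k x * X x k) *
      (ε * (∑ k, pderiv' d (fun y => pderiv' d u k y) k x) - ε⁻¹ * deriv W (u x)) :=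
    (continuous_finset_sum _ fun k _ => (hPc k).mul (hX1 k).continuous).mul
      ((continuous_const.mul (continuous_finset_sum _ fun k _ => hLapc k)).sub
        (continuous_const.mul hW'c))
  have hPper : ∀ (x : Fin d → ℝ) (m j : Fin d),
      pderiv' d u j (Function.update x m (x m + 1)) = pderiv' d u j x := by
    intro x m j
    unfold pderiv'
    rw [periodic_fderiv hud huper]
  -- the divergence-free vector field
  have hF1 : ∀ i, ContDiff ℝ 1 fun x => ε * (∑ j, pderiv' d u j x * X x j) * pderiv' d u i x
      - X x i * (ε / 2 * (∑ j, pderiv' d u j x ^ 2) + ε⁻¹ * W (u x)) := by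
    intro i
    have hS1 : ContDiff ℝ 1 fun x => ∑ j, pderiv' d u j x * X x j :=
      ContDiff.sum fun j _ => (hP1 j).mul (hX1 j)
    have hsq1 : ContDiff ℝ 1 fun x => ∑ j, pderiv' d u j x ^ 2 :=
      ContDiff.sum fun j _ => (hP1 j).pow 2
    have hWu1 : ContDiff ℝ 1 fun x => W (u x) :=
      (hW.of_le one_le_two).comp (hu.of_le one_le_two)
    exact ((contDiff_const.mul hS1).mul (hP1 i)).sub
      ((hX1 i).mul ((contDiff_const.mul hsq1).add (contDiff_const.mul hWu1)))
  have hFper : ∀ (x : Fin d → ℝ) (k i : Fin d),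
      (fun (x : Fin d → ℝ) (i : Fin d) => ε * (∑ j, pderiv' d u j x * X x j) * pderiv' d u i x
        - X x i * (ε / 2 * (∑ j, pderiv' d u j x ^ 2) + ε⁻¹ * W (u x)))
        (Function.update x k (x k + 1)) i
      = (fun (x : Fin d → ℝ) (i : Fin d) => ε * (∑ j, pderiv' d u j x * X x j) * pderiv' d u i x
        - X x i * (ε / 2 * (∑ j, pderiv' d u j x ^ 2) + ε⁻¹ * W (u x))) x i := by
    intro x k i
    simp only [hPper, hXper, huper]
  have hdiv0 := divfree (fun (x : Fin d → ℝ) (i : Fin d) =>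
      ε * (∑ j, pderiv' d u j x * X x j) * pderiv' d u i x
        - X x i * (ε / 2 * (∑ j, pderiv' d u j x ^ 2) + ε⁻¹ * W (u x))) hF1 hFper
  have hpt := divergence_pointwise d ε W hW u hu X hX
  have hAi : IntegrableOn (fun x => (∑ k, pderiv' d u k x * X x k) *
      (ε * (∑ k, pderiv' d (fun y => pderiv' d u k y) k x) - ε⁻¹ * deriv W (u x)))
      (unitCube d) := integrableOn_cube hAc
  have hGi : IntegrableOn (fun x => divg d X x * (ε / 2 * (∑ k, pderiv' d u k x ^ 2) + ε⁻¹ * W (u x))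
      - ε * ∑ j, ∑ k, pderiv' d u j x * pderiv' d (fun y => X y j) k x * pderiv' d u k x)
      (unitCube d) := integrableOn_cube ((hdivgc.mul hMc).sub (continuous_const.mul hTc))
  have hAG : (∫ x in unitCube d, (∑ k, pderiv' d u k x * X x k) *
        (ε * (∑ k, pderiv' d (fun y => pderiv' d u k y) k x) - ε⁻¹ * deriv W (u x)))
      - ∫ x in unitCube d, (divg d X x * (ε / 2 * (∑ k, pderiv' d u k x ^ 2) + ε⁻¹ * W (u x))
        - ε * ∑ j, ∑ k, pderiv' d u j x * pderiv' d (fun y => X y j) k x * pderiv' d u k x)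
      = 0 := by
    rw [← integral_sub hAi hGi, ← hdiv0]
    apply setIntegral_congr_fun hcube
    intro x _
    exact (hpt x).symm
  -- integrability of the nDXn terms
  have habs : Continuous fun x => (∑ j, ∑ k, |pderiv' d (fun y => X y j) k x|) :=
    continuous_finset_sum _ fun j _ => continuous_finset_sum _ fun k _ => (hCc j k).abs
  have key : ∀ h : (Fin d → ℝ) → ℝ, Continuous h →
      IntegrableOn (fun x => nDXn d u e₀ X x * h x) (unitCube d) := by
    intro h hh
    refine Integrable.mono' (integrableOn_cube (habs.mul hh.abs)) ?_ ?_
    · exact ((measurable_nDXn hu hX).mul hh.measurable).aestronglyMeasurable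
    · refine Filter.Eventually.of_forall fun x => ?_
      rw [Real.norm_eq_abs, abs_mul]
      exact mul_le_mul_of_nonneg_right (abs_nDXn_le he₀ x) (abs_nonneg _)
  have hiM : IntegrableOn (fun x => divg d X x *
      (ε / 2 * (∑ k, pderiv' d u k x ^ 2) + ε⁻¹ * W (u x))) (unitCube d) :=
    integrableOn_cube (hdivgc.mul hMc)
  have hi2 := key _ hMc
  have hi3 := key _ hξc
  have hR1 : (∫ x in unitCube d, (divg d X x - nDXn d u e₀ X x) *
        (ε / 2 * (∑ k, pderiv' d u k x ^ 2) + ε⁻¹ * W (u x)))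
      = (∫ x in unitCube d, divg d X x * (ε / 2 * (∑ k, pderiv' d u k x ^ 2) + ε⁻¹ * W (u x)))
        - ∫ x in unitCube d, nDXn d u e₀ X x *
            (ε / 2 * (∑ k, pderiv' d u k x ^ 2) + ε⁻¹ * W (u x)) := by
    rw [← integral_sub hiM hi2]
    apply setIntegral_congr_fun hcube
    intro x _
    ring
  have hR2 : (∫ x in unitCube d, nDXn d u e₀ X x *
        (ε / 2 * (∑ k, pderiv' d u k x ^ 2) + ε⁻¹ * W (u x)))
      + (∫ x in unitCube d, nDXn d u e₀ X x *
        (ε / 2 * (∑ k, pderiv' d u k x ^ 2) - ε⁻¹ * W (u x)))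
      = ∫ x in unitCube d,
          ε * ∑ j, ∑ k, pderiv' d u j x * pderiv' d (fun y => X y j) k x * pderiv' d u k x := by
    rw [← integral_add hi2 hi3]
    apply setIntegral_congr_fun hcube
    intro x _
    have h := nDXn_mul d u e₀ X x
    linear_combination ε * h
  have hGsplit : (∫ x in unitCube d,
        (divg d X x * (ε / 2 * (∑ k, pderiv' d u k x ^ 2) + ε⁻¹ * W (u x))
          - ε * ∑ j, ∑ k, pderiv' d u j x * pderiv' d (fun y => X y j) k x * pderiv' d u k x))
      = (∫ x in unitCube d, divg d X x * (ε / 2 * (∑ k, pderiv' d u k x ^ 2) + ε⁻¹ * W (u x)))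
        - ∫ x in unitCube d,
            ε * ∑ j, ∑ k, pderiv' d u j x * pderiv' d (fun y => X y j) k x * pderiv' d u k x :=
    integral_sub hiM (integrableOn_cube (continuous_const.mul hTc))
  rw [hR1]
  linarith [hAG, hR2, hGsplit]
end
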